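/- arXiv:1411.3134 — 7 statements merged into one kernel-verified Lean document; each statement's English description precedes it below -/
import Mathlib

section
/- Let A, B ∈ ℝ and consider the recursion X_{n+1} = A X_n + B √h σ ξ_n with deterministic initial value X_0 = x. If A² < 1, then lim_{n→∞} E(X_n²) = h σ² B²/(1 − A²) = (σ²/(2γ)) · R(z), where R(z) := 2 z B²/(A² − 1) and z = −γh (note R(z) ≥ 0 in this case, so R(z) = |R(z)|). -/
open MeasureTheory ProbabilityTheory Filter Topology

/-! Unrolling the recursion writes `X n` as a deterministic term plus a linear combination of
`ξ 0, …, ξ (n - 1)`, so `X n` is independent of the centred `ξ n` and the cross term of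
`(A X n + B √h σ ξ n)²` has zero mean. Hence `m n = E (X n)²` satisfies the affine recursion
`m (n + 1) = A² m n + h σ² B²`, which for `A² < 1` converges to its fixed point. -/

open Finset
open scoped NNReal ENNReal

theorem tendsto_of_forall_succ_eq_mul_add {a b : ℝ} {m : ℕ → ℝ} (ha : |a| < 1)
    (hm : ∀ n, m (n + 1) = a * m n + b) : Tendsto m atTop (𝓝 (b / (1 - a))) := by
  have ha1 : 1 - a ≠ 0 := by linarith [le_abs_self a]
  have hclosed : ∀ n, m n = a ^ n * (m 0 - b / (1 - a)) + b / (1 - a) := by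
    intro n
    induction n with
    | zero => simp
    | succ n ih => rw [hm, ih]; field_simp; ring
  have hpow := (tendsto_pow_atTop_nhds_zero_of_abs_lt_one ha).mul_const (m 0 - b / (1 - a))
  simpa [← hclosed] using hpow.add_const (b / (1 - a))

theorem integral_sq_gaussianReal_zero (v : ℝ≥0) : ∫ x, x ^ 2 ∂gaussianReal 0 v = v := by
  have h := variance_fun_id_gaussianReal (μ := 0) (v := v)
  rw [variance_eq_integral aemeasurable_id', integral_id_gaussianReal] at h
  simpa using h

namespace ProbabilityTheory.HasLaw

variable {Ω : Type*} [MeasurableSpace Ω] {P : Measure Ω} {X : Ω → ℝ} {m : ℝ} {v : ℝ≥0}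

theorem memLp_of_gaussianReal (hX : HasLaw X (gaussianReal m v) P) {p : ℝ≥0∞} (hp : p ≠ ∞) :
    MemLp X p P := by
  have h := memLp_id_gaussianReal' (μ := m) (v := v) p hp
  rw [← hX.map_eq] at h
  exact (memLp_map_measure_iff aestronglyMeasurable_id hX.aemeasurable).mp h

theorem integral_eq_of_gaussianReal (hX : HasLaw X (gaussianReal m v) P) : P[X] = m := by
  rw [hX.integral_eq, integral_id_gaussianReal]

theorem integral_sq_of_gaussianReal (hX : HasLaw X (gaussianReal 0 v) P) :
    ∫ ω, X ω ^ 2 ∂P = v := by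
  rw [← integral_sq_gaussianReal_zero v, ← hX.integral_comp (f := fun x => x ^ 2) (by fun_prop)]
  rfl

end ProbabilityTheory.HasLaw

theorem ProbabilityTheory.iIndepFun.indepFun_sum_range_mul {Ω : Type*} [MeasurableSpace Ω]
    {μ : Measure Ω} {ξ : ℕ → Ω → ℝ} (hindep : iIndepFun ξ μ) (hmeas : ∀ n, Measurable (ξ n))
    (w : ℕ → ℝ) (n : ℕ) : IndepFun (fun ω => ∑ k ∈ range n, w k * ξ k ω) (ξ n) μ := by
  have hφ : Measurable fun v : range n → ℝ => ∑ k : range n, w k * v k :=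
    Finset.measurable_sum _ fun k _ => (measurable_pi_apply k).const_mul _
  have hψ : Measurable fun v : ({n} : Finset ℕ) → ℝ => v ⟨n, mem_singleton_self n⟩ :=
    measurable_pi_apply _
  have h := (hindep.indepFun_finset (range n) {n} (by simp) hmeas).comp hφ hψ
  convert h using 1
  · ext ω
    exact (Finset.sum_coe_sort (range n) fun k => w k * ξ k ω).symm
  · rfl

theorem ProbabilityTheory.IndepFun.integral_sq_mul_add_mul {Ω : Type*} [MeasurableSpace Ω]
    {μ : Measure Ω} [IsFiniteMeasure μ] {Y Z : Ω → ℝ} (hYZ : IndepFun Y Z μ) (hY : MemLp Y 2 μ)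
    (hZ : MemLp Z 2 μ) (hZ0 : μ[Z] = 0) (a b : ℝ) :
    ∫ ω, (a * Y ω + b * Z ω) ^ 2 ∂μ = a ^ 2 * ∫ ω, Y ω ^ 2 ∂μ + b ^ 2 * ∫ ω, Z ω ^ 2 ∂μ := by
  have hcross : ∫ ω, Y ω * Z ω ∂μ = 0 := by
    rw [hYZ.integral_fun_mul_eq_mul_integral hY.1 hZ.1, hZ0, mul_zero]
  have iY : Integrable (fun ω => a ^ 2 * Y ω ^ 2) μ := hY.integrable_sq.const_mul _
  have iYZ : Integrable (fun ω => 2 * a * b * (Y ω * Z ω)) μ :=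
    (hYZ.integrable_mul (hY.integrable one_le_two) (hZ.integrable one_le_two)).const_mul _
  have iZ : Integrable (fun ω => b ^ 2 * Z ω ^ 2) μ := hZ.integrable_sq.const_mul _
  have iYYZ : Integrable (fun ω => a ^ 2 * Y ω ^ 2 + 2 * a * b * (Y ω * Z ω)) μ := iY.add iYZ
  calc ∫ ω, (a * Y ω + b * Z ω) ^ 2 ∂μ
      = ∫ ω, a ^ 2 * Y ω ^ 2 + 2 * a * b * (Y ω * Z ω) + b ^ 2 * Z ω ^ 2 ∂μ := by
        congr 1; ext ω; ring
    _ = a ^ 2 * ∫ ω, Y ω ^ 2 ∂μ + b ^ 2 * ∫ ω, Z ω ^ 2 ∂μ := by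
        rw [integral_add iYYZ iZ, integral_add iY iYZ, integral_const_mul,
          integral_const_mul, integral_const_mul, hcross]
        ring

section LinearRecursion

variable {Ω : Type*} {ξ X : ℕ → Ω → ℝ} {a c x : ℝ}

theorem linearRecursion_eq_sum (hX0 : X 0 = fun _ => x)
    (hrec : ∀ n ω, X (n + 1) ω = a * X n ω + c * ξ n ω) (n : ℕ) :
    X n = fun ω => a ^ n * x + ∑ k ∈ range n, c * a ^ (n - 1 - k) * ξ k ω := by
  induction n with
  | zero => simpa using hX0
  | succ n ih =>
    ext ω
    have hpow : ∀ k ∈ range n, a * (c * a ^ (n - 1 - k) * ξ k ω) = c * a ^ (n - k) * ξ k ω := by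
      intro k hk
      rw [show n - k = n - 1 - k + 1 by have := mem_range.mp hk; omega, pow_succ]
      ring
    rw [hrec, ih, sum_range_succ, mul_add, mul_sum, sum_congr rfl hpow]
    simp only [Nat.add_sub_cancel, Nat.sub_self, pow_zero, pow_succ]
    ring

variable [MeasurableSpace Ω] {μ : Measure Ω}

theorem memLp_linearRecursion [IsFiniteMeasure μ] {p : ℝ≥0∞} (hX0 : X 0 = fun _ => x)
    (hrec : ∀ n ω, X (n + 1) ω = a * X n ω + c * ξ n ω) (hξ : ∀ n, MemLp (ξ n) p μ) (n : ℕ) :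
    MemLp (X n) p μ := by
  induction n with
  | zero => rw [hX0]; exact memLp_const x
  | succ n ih =>
    rw [show X (n + 1) = fun ω => a * X n ω + c * ξ n ω from funext (hrec n)]
    exact (ih.const_mul a).add ((hξ n).const_mul c)

theorem indepFun_linearRecursion (hX0 : X 0 = fun _ => x)
    (hrec : ∀ n ω, X (n + 1) ω = a * X n ω + c * ξ n ω) (hindep : iIndepFun ξ μ)
    (hmeas : ∀ n, Measurable (ξ n)) (n : ℕ) : IndepFun (X n) (ξ n) μ := by
  rw [linearRecursion_eq_sum hX0 hrec n]
  exact (hindep.indepFun_sum_range_mul hmeas (fun k => c * a ^ (n - 1 - k)) n).comp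
    (measurable_const_add (a ^ n * x)) measurable_id

theorem integral_sq_linearRecursion_succ [IsFiniteMeasure μ] (hX0 : X 0 = fun _ => x)
    (hrec : ∀ n ω, X (n + 1) ω = a * X n ω + c * ξ n ω) (hindep : iIndepFun ξ μ)
    (hmeas : ∀ n, Measurable (ξ n)) (hξ : ∀ n, MemLp (ξ n) 2 μ) (hξ0 : ∀ n, μ[ξ n] = 0)
    (n : ℕ) :
    ∫ ω, X (n + 1) ω ^ 2 ∂μ = a ^ 2 * ∫ ω, X n ω ^ 2 ∂μ + c ^ 2 * ∫ ω, ξ n ω ^ 2 ∂μ := by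
  simp_rw [hrec]
  exact (indepFun_linearRecursion hX0 hrec hindep hmeas n).integral_sq_mul_add_mul
    (memLp_linearRecursion hX0 hrec hξ n) (hξ n) (hξ0 n) a c

end LinearRecursion

theorem limit_second_moment_linear_recursion_general
    {Ω : Type*} [MeasurableSpace Ω] (μ : Measure Ω) [IsProbabilityMeasure μ]
    (γ σ h : ℝ) (hγ : 0 < γ) (hh : 0 < h)
    (ξ : ℕ → Ω → ℝ) (hmeas : ∀ n, Measurable (ξ n))
    (hindep : iIndepFun ξ μ)
    (hgauss : ∀ n, μ.map (ξ n) = gaussianReal 0 1)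
    (A B x : ℝ) (X : ℕ → Ω → ℝ)
    (hX0 : X 0 = fun _ => x)
    (hrec : ∀ n ω, X (n + 1) ω = A * X n ω + B * Real.sqrt h * σ * ξ n ω)
    (hA : A ^ 2 < 1) :
    Tendsto (fun n => ∫ ω, (X n ω) ^ 2 ∂μ) atTop (𝓝 (h * σ ^ 2 * B ^ 2 / (1 - A ^ 2)))
      ∧ h * σ ^ 2 * B ^ 2 / (1 - A ^ 2)
          = σ ^ 2 / (2 * γ) * (2 * (-γ * h) * B ^ 2 / (A ^ 2 - 1))
      ∧ 0 ≤ 2 * (-γ * h) * B ^ 2 / (A ^ 2 - 1) := by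
  have hlaw : ∀ n, HasLaw (ξ n) (gaussianReal 0 1) μ :=
    fun n => ⟨(hmeas n).aemeasurable, hgauss n⟩
  have hstep : ∀ n, ∫ ω, X (n + 1) ω ^ 2 ∂μ
      = A ^ 2 * ∫ ω, X n ω ^ 2 ∂μ + (B * Real.sqrt h * σ) ^ 2 := by
    intro n
    rw [integral_sq_linearRecursion_succ hX0 hrec hindep hmeas
      (fun k => (hlaw k).memLp_of_gaussianReal (by norm_num))
      (fun k => (hlaw k).integral_eq_of_gaussianReal) n, (hlaw n).integral_sq_of_gaussianReal,
      NNReal.coe_one, mul_one]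
  have hnoise : (B * Real.sqrt h * σ) ^ 2 = h * σ ^ 2 * B ^ 2 := by
    rw [mul_pow, mul_pow, Real.sq_sqrt hh.le]
    ring
  have hA2 : |A ^ 2| < 1 := by rwa [abs_of_nonneg (sq_nonneg A)]
  have hA1 : A ^ 2 - 1 < 0 := by linarith
  refine ⟨hnoise ▸ tendsto_of_forall_succ_eq_mul_add hA2 hstep, ?_, ?_⟩
  · have hA1' : 1 - A ^ 2 ≠ 0 := by linarith
    field_simp [hA1.ne, hA1', hγ.ne']
    ring
  · exact div_nonneg_of_nonpos (by nlinarith [mul_pos hγ hh, sq_nonneg B]) hA1.le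

/-- For the recursion `X_{n+1} = A X_n + B √h σ ξ_n` with deterministic
initial value `X_0 = x` and i.i.d. standard Gaussian `ξ_n`, if `A² < 1` then
`lim_{n→∞} E(X_n²) = h σ² B² / (1 - A²) = (σ²/(2γ)) R(z)` where
`R(z) = 2 z B² / (A² - 1)`, `z = -γh`, and `R(z) ≥ 0`. -/
theorem limit_second_moment_linear_recursion
    {Ω : Type*} [MeasurableSpace Ω] (μ : Measure Ω) [IsProbabilityMeasure μ]
    (γ σ h : ℝ) (hγ : 0 < γ) (hσ : 0 < σ) (hh : 0 < h)
    (ξ : ℕ → Ω → ℝ) (hmeas : ∀ n, Measurable (ξ n))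
    (hindep : iIndepFun ξ μ)
    (hgauss : ∀ n, μ.map (ξ n) = gaussianReal 0 1)
    (A B x : ℝ) (X : ℕ → Ω → ℝ)
    (hX0 : X 0 = fun _ => x)
    (hrec : ∀ n ω, X (n + 1) ω = A * X n ω + B * Real.sqrt h * σ * ξ n ω)
    (hA : A ^ 2 < 1) :
    Tendsto (fun n => ∫ ω, (X n ω) ^ 2 ∂μ) atTop (𝓝 (h * σ ^ 2 * B ^ 2 / (1 - A ^ 2)))
      ∧ h * σ ^ 2 * B ^ 2 / (1 - A ^ 2)
          = σ ^ 2 / (2 * γ) * (2 * (-γ * h) * B ^ 2 / (A ^ 2 - 1))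
      ∧ 0 ≤ 2 * (-γ * h) * B ^ 2 / (A ^ 2 - 1) :=
  limit_second_moment_linear_recursion_general μ γ σ h hγ hh ξ hmeas hindep hgauss A B x X hX0 hrec
    hA
end

section
/- Consider the postprocessed Euler scheme applied to the Ornstein–Uhlenbeck equation: X_{n+1} = X_n − γh(X_n + (1/2)σ√h ξ_n) + σ√h ξ_n with deterministic X_0 = x, and X̄_n := X_n + (1/2)σ√h ξ_n. If 0 < γh < 2, then lim_{n→∞} E(X̄_n²) = σ²/(2γ), i.e. the postprocessed scheme has no bias in sampling the stationary second moment of the Ornstein–Uhlenbeck process, for every stable stepsize h. -/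
/-!
With `a = 1 - γh` and `b = σ√h (1 - γh/2)` the scheme is the autoregression
`X_{n+1} = a X_n + b ξ_n`. Since `X_n` is a function of `ξ_0, …, ξ_{n-1}`, it is independent of
`ξ_n`, so `m_n = E X_n²` obeys `m_{n+1} = a² m_n + b²` and, as `|a| < 1` exactly when
`0 < γh < 2`, tends to `b² / (1 - a²) = σ² (2 - γh) / (4γ)`. This carries an `O(h)` bias, which
the postprocessing term cancels exactly: `E X̄_n² = m_n + σ²h/4`.
-/

open MeasureTheory ProbabilityTheory Filter Topology

namespace ProbabilityTheory.HasLaw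

variable {Ω : Type*} [MeasurableSpace Ω] {μ : Measure Ω} {ξ : Ω → ℝ} {m : ℝ} {v : NNReal}

lemma integral_eq_of_gaussianReal_s4 (hξ : HasLaw ξ (gaussianReal m v) μ) : ∫ ω, ξ ω ∂μ = m :=
  hξ.integral_eq.trans integral_id_gaussianReal

lemma integral_sq_of_gaussianReal_zero (hξ : HasLaw ξ (gaussianReal 0 v) μ) :
    ∫ ω, ξ ω ^ 2 ∂μ = v := by
  rw [← variance_id_gaussianReal (μ := 0), ← hξ.variance_eq,
    variance_of_integral_eq_zero hξ.aemeasurable hξ.integral_eq_of_gaussianReal_s4]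

lemma memLp_of_gaussianReal_s4 (hξ : HasLaw ξ (gaussianReal m v) μ) (p : NNReal) : MemLp ξ p μ := by
  have hid : MemLp id p (μ.map ξ) := hξ.map_eq ▸ memLp_id_gaussianReal p
  exact (memLp_map_measure_iff aestronglyMeasurable_id hξ.aemeasurable).1 hid

end ProbabilityTheory.HasLaw

lemma integral_mul_add_mul_sq_of_indepFun {Ω : Type*} [MeasurableSpace Ω] {μ : Measure Ω}
    {Y Z : Ω → ℝ} (hY : MemLp Y 2 μ) (hZ : MemLp Z 2 μ) (hYZ : IndepFun Y Z μ)
    (hZ0 : ∫ ω, Z ω ∂μ = 0) (a b : ℝ) :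
    ∫ ω, (a * Y ω + b * Z ω) ^ 2 ∂μ = a ^ 2 * ∫ ω, Y ω ^ 2 ∂μ + b ^ 2 * ∫ ω, Z ω ^ 2 ∂μ := by
  have hY2 : Integrable (fun ω => Y ω ^ 2) μ := hY.integrable_sq
  have hZ2 : Integrable (fun ω => Z ω ^ 2) μ := hZ.integrable_sq
  have hYZ1 : Integrable (fun ω => Y ω * Z ω) μ := hY.integrable_mul hZ
  have hcross : ∫ ω, Y ω * Z ω ∂μ = 0 := by
    rw [hYZ.integral_fun_mul_eq_mul_integral hY.aestronglyMeasurable hZ.aestronglyMeasurable, hZ0,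
      mul_zero]
  calc ∫ ω, (a * Y ω + b * Z ω) ^ 2 ∂μ
      = ∫ ω, a ^ 2 * Y ω ^ 2 + 2 * a * b * (Y ω * Z ω) + b ^ 2 * Z ω ^ 2 ∂μ := by
        congr 1 with ω; ring
    _ = a ^ 2 * ∫ ω, Y ω ^ 2 ∂μ + 2 * a * b * ∫ ω, Y ω * Z ω ∂μ + b ^ 2 * ∫ ω, Z ω ^ 2 ∂μ := by
        rw [integral_add, integral_add, integral_const_mul, integral_const_mul,
          integral_const_mul]
        exacts [hY2.const_mul _, hYZ1.const_mul _, (hY2.const_mul _).add (hYZ1.const_mul _),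
          hZ2.const_mul _]
    _ = a ^ 2 * ∫ ω, Y ω ^ 2 ∂μ + b ^ 2 * ∫ ω, Z ω ^ 2 ∂μ := by rw [hcross]; ring

lemma ProbabilityTheory.iIndepFun.indepFun_of_measurable_iSup_lt {Ω β γ : Type*}
    [MeasurableSpace Ω] {μ : Measure Ω} [mβ : MeasurableSpace β] [MeasurableSpace γ]
    {ξ : ℕ → Ω → β} (hindep : iIndepFun ξ μ) (hmeas : ∀ n, Measurable (ξ n)) {n : ℕ}
    {Y : Ω → γ} (hY : Measurable[⨆ i ∈ Set.Iio n, mβ.comap (ξ i)] Y) : IndepFun Y (ξ n) μ := by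
  have hpast : Indep (⨆ i ∈ Set.Iio n, mβ.comap (ξ i)) (⨆ i ∈ ({n} : Set ℕ), mβ.comap (ξ i)) μ :=
    indep_iSup_of_disjoint (fun i => (hmeas i).comap_le) hindep.iIndep
      (Set.disjoint_singleton_right.2 (lt_irrefl n))
  rw [IndepFun_iff_Indep]
  exact indep_of_indep_of_le hpast hY.comap_le (le_iSup₂_of_le n rfl le_rfl)

lemma tendsto_of_forall_eq_mul_add {q r : ℝ} (hq : |q| < 1) {m : ℕ → ℝ}
    (hm : ∀ n, m (n + 1) = q * m n + r) : Tendsto m atTop (𝓝 (r / (1 - q))) := by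
  have hq1 : 1 - q ≠ 0 := by linarith [le_abs_self q]
  have hclosed : ∀ n, m n = q ^ n * (m 0 - r / (1 - q)) + r / (1 - q) := by
    intro n
    induction n with
    | zero => ring
    | succ n ih => rw [hm, ih]; field_simp; ring
  rw [funext hclosed]
  simpa using
    ((tendsto_pow_atTop_nhds_zero_of_abs_lt_one hq).mul_const (m 0 - r / (1 - q))).add_const
      (r / (1 - q))

section Autoregressive

variable {Ω : Type*} {ξ X : ℕ → Ω → ℝ} {a b x : ℝ}

lemma measurable_iSup_comap_lt_of_ar (hX0 : X 0 = fun _ => x)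
    (hrec : ∀ n ω, X (n + 1) ω = a * X n ω + b * ξ n ω) (n : ℕ) :
    Measurable[⨆ i ∈ Set.Iio n, MeasurableSpace.comap (ξ i) inferInstance] (X n) := by
  induction n with
  | zero => rw [hX0]; exact measurable_const
  | succ n ih =>
    have hmono : ⨆ i ∈ Set.Iio n, MeasurableSpace.comap (ξ i) inferInstance
        ≤ ⨆ i ∈ Set.Iio (n + 1), MeasurableSpace.comap (ξ i) inferInstance :=
      biSup_mono fun i hi => Nat.lt_succ_of_lt hi
    have hξn : Measurable[⨆ i ∈ Set.Iio (n + 1), MeasurableSpace.comap (ξ i) inferInstance]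
        (ξ n) :=
      Measurable.of_comap_le (le_iSup₂_of_le n (Nat.lt_succ_self n) le_rfl)
    rw [funext (hrec n)]
    exact ((ih.mono hmono le_rfl).const_mul a).add (hξn.const_mul b)

variable [MeasurableSpace Ω] {μ : Measure Ω} [IsFiniteMeasure μ]

lemma memLp_two_of_ar (hξ : ∀ n, MemLp (ξ n) 2 μ) (hX0 : X 0 = fun _ => x)
    (hrec : ∀ n ω, X (n + 1) ω = a * X n ω + b * ξ n ω) (n : ℕ) : MemLp (X n) 2 μ := by
  induction n with
  | zero => rw [hX0]; exact memLp_const x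
  | succ n ih => rw [funext (hrec n)]; exact (ih.const_mul a).add ((hξ n).const_mul b)

lemma integral_mul_add_mul_sq_of_ar (hindep : iIndepFun ξ μ) (hmeas : ∀ n, Measurable (ξ n))
    (hlaw : ∀ n, HasLaw (ξ n) (gaussianReal 0 1) μ) (hX0 : X 0 = fun _ => x)
    (hrec : ∀ n ω, X (n + 1) ω = a * X n ω + b * ξ n ω) (n : ℕ) (a' b' : ℝ) :
    ∫ ω, (a' * X n ω + b' * ξ n ω) ^ 2 ∂μ = a' ^ 2 * ∫ ω, X n ω ^ 2 ∂μ + b' ^ 2 := by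
  have hξ : ∀ n, MemLp (ξ n) 2 μ := fun n => (hlaw n).memLp_of_gaussianReal_s4 2
  rw [integral_mul_add_mul_sq_of_indepFun (memLp_two_of_ar hξ hX0 hrec n) (hξ n)
    (hindep.indepFun_of_measurable_iSup_lt hmeas (measurable_iSup_comap_lt_of_ar hX0 hrec n))
    (hlaw n).integral_eq_of_gaussianReal_s4, (hlaw n).integral_sq_of_gaussianReal_zero]
  simp

end Autoregressive

theorem postprocessed_euler_OU_exact_second_moment_general
    {Ω : Type*} [MeasurableSpace Ω] (μ : Measure Ω) [IsProbabilityMeasure μ]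
    (γ σ h : ℝ) (hγ : 0 < γ) (hh : 0 < h) (hstab : γ * h < 2)
    (ξ : ℕ → Ω → ℝ) (hmeas : ∀ n, Measurable (ξ n))
    (hindep : iIndepFun ξ μ)
    (hgauss : ∀ n, μ.map (ξ n) = gaussianReal 0 1)
    (x : ℝ) (X : ℕ → Ω → ℝ) (hX0 : X 0 = fun _ => x)
    (hrec : ∀ n ω, X (n + 1) ω
      = X n ω - γ * h * (X n ω + 1 / 2 * σ * Real.sqrt h * ξ n ω) + σ * Real.sqrt h * ξ n ω)
    (Xbar : ℕ → Ω → ℝ)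
    (hXbar : ∀ n ω, Xbar n ω = X n ω + 1 / 2 * σ * Real.sqrt h * ξ n ω) :
    Tendsto (fun n => ∫ ω, (Xbar n ω) ^ 2 ∂μ) atTop (𝓝 (σ ^ 2 / (2 * γ))) := by
  set a := 1 - γ * h
  set b := σ * √h * (1 - γ * h / 2)
  set c := 1 / 2 * σ * √h
  have hrec' : ∀ n ω, X (n + 1) ω = a * X n ω + b * ξ n ω := fun n ω => by rw [hrec]; ring
  have hmoment := integral_mul_add_mul_sq_of_ar hindep hmeas
    (fun n => ⟨(hmeas n).aemeasurable, hgauss n⟩) hX0 hrec'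
  have hbar : ∀ n, ∫ ω, Xbar n ω ^ 2 ∂μ = ∫ ω, X n ω ^ 2 ∂μ + c ^ 2 := fun n => by
    simpa [hXbar] using hmoment n 1 c
  have ha : |a ^ 2| < 1 := by
    rw [abs_of_nonneg (sq_nonneg a)]
    nlinarith [mul_pos (mul_pos hγ hh) (sub_pos.2 hstab)]
  have hX : Tendsto (fun n => ∫ ω, X n ω ^ 2 ∂μ) atTop (𝓝 (b ^ 2 / (1 - a ^ 2))) :=
    tendsto_of_forall_eq_mul_add ha fun n => by simp_rw [hrec', hmoment]
  have hlim : b ^ 2 / (1 - a ^ 2) + c ^ 2 = σ ^ 2 / (2 * γ) := by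
    have hsq : √h ^ 2 = h := Real.sq_sqrt hh.le
    have hdenom : 1 - a ^ 2 = γ * h * (2 - γ * h) := by ring
    have hpos : 0 < 2 - γ * h := sub_pos.2 hstab
    rw [hdenom]
    simp only [b, c, mul_pow, hsq]
    field_simp
    ring
  rw [funext hbar, ← hlim]
  exact hX.add_const (c ^ 2)

/-- The postprocessed Euler scheme applied to the Ornstein–Uhlenbeck
equation, `X_{n+1} = X_n - γh (X_n + ½σ√h ξ_n) + σ√h ξ_n`, `X̄_n = X_n + ½σ√h ξ_n`,
with deterministic `X_0 = x`, i.i.d. standard Gaussian `ξ_n` and `0 < γh < 2`, satisfies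
`lim_{n→∞} E(X̄_n²) = σ²/(2γ)`: no bias in the stationary second moment for every stable
stepsize. -/
theorem postprocessed_euler_OU_exact_second_moment
    {Ω : Type*} [MeasurableSpace Ω] (μ : Measure Ω) [IsProbabilityMeasure μ]
    (γ σ h : ℝ) (hγ : 0 < γ) (hσ : 0 < σ) (hh : 0 < h) (hstab : γ * h < 2)
    (ξ : ℕ → Ω → ℝ) (hmeas : ∀ n, Measurable (ξ n))
    (hindep : iIndepFun ξ μ)
    (hgauss : ∀ n, μ.map (ξ n) = gaussianReal 0 1)
    (x : ℝ) (X : ℕ → Ω → ℝ) (hX0 : X 0 = fun _ => x)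
    (hrec : ∀ n ω, X (n + 1) ω
      = X n ω - γ * h * (X n ω + 1 / 2 * σ * Real.sqrt h * ξ n ω) + σ * Real.sqrt h * ξ n ω)
    (Xbar : ℕ → Ω → ℝ)
    (hXbar : ∀ n ω, Xbar n ω = X n ω + 1 / 2 * σ * Real.sqrt h * ξ n ω) :
    Tendsto (fun n => ∫ ω, (Xbar n ω) ^ 2 ∂μ) atTop (𝓝 (σ ^ 2 / (2 * γ))) :=
  postprocessed_euler_OU_exact_second_moment_general μ γ σ h hγ hh hstab ξ hmeas hindep hgauss x X
    hX0 hrec Xbar hXbar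
end

section
/- Let Q be a real symmetric positive definite d×d matrix, h > 0 and σ > 0. Then the matrix S := (σ²/2)Q⁻¹ − (σ²h/4)I satisfies the discrete Lyapunov (stationary covariance) equation S = (I − hQ) S (I − hQ)ᵀ + σ²h (I − (h/2)Q)(I − (h/2)Q)ᵀ. Consequently S + (σ²h/4)I = (σ²/2)Q⁻¹: the stationary covariance of the postprocessed variable X̄_n = X_n + (σ√h/2)ξ_n equals the exact Gibbs covariance (σ²/2)Q⁻¹, i.e. the postprocessed Euler scheme samples the invariant measure exactly for linear drift in ℝ^d. -/
/-!
Every matrix in the Lyapunov equation is a polynomial in `Q` and `Q⁻¹`; these commute, and the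
symmetry of `Q` removes the transposes. The equation therefore reduces to the identity
`(1 - hq)² (c q⁻¹ - ch/2) + 2ch (1 - hq/2)² = c q⁻¹ - ch/2` (with `c = σ²/2`), which holds in any
algebra in which `q` has a two-sided inverse.
-/

open Matrix

theorem smul_inverse_sub_smul_one_solves_euler_lyapunov {𝕜 R : Type*} [Field 𝕜] [CharZero 𝕜]
    [Ring R] [Algebra 𝕜 R] {q p : R} (hqp : q * p = 1) (hpq : p * q = 1) (σ h : 𝕜) :
    (σ ^ 2 / 2) • p - (σ ^ 2 * h / 4) • (1 : R) =
      (1 - h • q) * ((σ ^ 2 / 2) • p - (σ ^ 2 * h / 4) • (1 : R)) * (1 - h • q)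
        + (σ ^ 2 * h) • ((1 - (h / 2) • q) * (1 - (h / 2) • q)) := by
  simp only [mul_sub, sub_mul, smul_mul_assoc, mul_smul_comm, hqp, hpq, smul_smul, mul_one,
    one_mul, smul_sub]
  module

theorem transpose_one_sub_smul_of_isSymm {n α R : Type*} [DecidableEq n] [Zero α] [One α] [Sub α]
    [SMul R α] {Q : Matrix n n α} (hQ : Q.IsSymm) (c : R) : (1 - c • Q)ᵀ = 1 - c • Q :=
  (isSymm_one.sub (hQ.smul c)).eq

theorem postprocessed_euler_linear_exact_covariance_general
    (d : ℕ) (Q : Matrix (Fin d) (Fin d) ℝ)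
    (hQsymm : Q.IsSymm) (hQpos : Q.PosDef)
    (h σ : ℝ)
    (S : Matrix (Fin d) (Fin d) ℝ)
    (hS : S = (σ ^ 2 / 2) • Q⁻¹ - (σ ^ 2 * h / 4) • (1 : Matrix (Fin d) (Fin d) ℝ)) :
    S = (1 - h • Q) * S * (1 - h • Q)ᵀ
        + (σ ^ 2 * h) • ((1 - (h / 2) • Q) * (1 - (h / 2) • Q)ᵀ)
      ∧ S + (σ ^ 2 * h / 4) • (1 : Matrix (Fin d) (Fin d) ℝ) = (σ ^ 2 / 2) • Q⁻¹ := by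
  have hQdet : IsUnit Q.det := (Matrix.isUnit_iff_isUnit_det Q).mp hQpos.isUnit
  subst hS
  refine ⟨?_, sub_add_cancel _ _⟩
  rw [transpose_one_sub_smul_of_isSymm hQsymm, transpose_one_sub_smul_of_isSymm hQsymm]
  exact smul_inverse_sub_smul_one_solves_euler_lyapunov (mul_nonsing_inv Q hQdet)
    (nonsing_inv_mul Q hQdet) σ h

/-- For `Q` real symmetric positive definite, `h > 0`, `σ > 0`, the matrix
`S := (σ²/2)Q⁻¹ - (σ²h/4)I` satisfies the discrete Lyapunov (stationary covariance) equation
`S = (I - hQ) S (I - hQ)ᵀ + σ²h (I - (h/2)Q)(I - (h/2)Q)ᵀ`; consequently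
`S + (σ²h/4)I = (σ²/2)Q⁻¹`, i.e. the stationary covariance of the postprocessed Euler scheme
equals the exact Gibbs covariance for a linear drift in `ℝ^d`. -/
theorem postprocessed_euler_linear_exact_covariance
    (d : ℕ) (hd : 1 ≤ d) (Q : Matrix (Fin d) (Fin d) ℝ)
    (hQsymm : Q.IsSymm) (hQpos : Q.PosDef)
    (h σ : ℝ) (hh : 0 < h) (hσ : 0 < σ)
    (S : Matrix (Fin d) (Fin d) ℝ)
    (hS : S = (σ ^ 2 / 2) • Q⁻¹ - (σ ^ 2 * h / 4) • (1 : Matrix (Fin d) (Fin d) ℝ)) :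
    S = (1 - h • Q) * S * (1 - h • Q)ᵀ
        + (σ ^ 2 * h) • ((1 - (h / 2) • Q) * (1 - (h / 2) • Q)ᵀ)
      ∧ S + (σ ^ 2 * h / 4) • (1 : Matrix (Fin d) (Fin d) ℝ) = (σ ^ 2 / 2) • Q⁻¹ :=
  postprocessed_euler_linear_exact_covariance_general d Q hQsymm hQpos h σ S hS
end

section
/- Consider the Euler–Maruyama scheme for the Ornstein–Uhlenbeck equation, X_{n+1} = (1 − γh)X_n + σ√h ξ_n with deterministic X_0 = x and 0 < γh < 2, together with the deterministic postprocessor X̄_n := √(1 − γh/2) · X_n. Then lim_{n→∞} E(X̄_n²) = σ²/(2γ), i.e. the corresponding R-function of Euler–Maruyama is R(z) = 2/(2+z) and the postprocessor C(z) = √(1 + z/2) (z = −γh) yields exact sampling of the stationary second moment. -/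
open MeasureTheory ProbabilityTheory Filter Topology

/-!
Independence of `X n` from `ξ n` kills the cross term, so `m n := E[X n ^ 2]` satisfies the affine
recursion `m (n + 1) = (1 - γh)² m n + σ²h`. Since `|1 - γh| < 1` it converges to its fixed point
`σ²h / (1 - (1 - γh)²) = σ² / (γ (2 - γh))`, and the factor `1 - γh/2` of the postprocessor turns
this into `σ² / (2γ)`.
-/

namespace ProbabilityTheory.HasLaw

variable {Ω : Type*} [MeasurableSpace Ω] {μ : Measure Ω} {ζ : Ω → ℝ}

lemma memLp_two_of_gaussianReal (hζ : HasLaw ζ (gaussianReal 0 1) μ) : MemLp ζ 2 μ := by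
  have h := memLp_id_gaussianReal' (μ := 0) (v := 1) 2 ENNReal.ofNat_ne_top
  rw [← hζ.map_eq] at h
  exact (memLp_map_measure_iff (by rw [hζ.map_eq]; exact aestronglyMeasurable_id)
    hζ.aemeasurable).mp h

lemma integral_eq_zero_of_gaussianReal (hζ : HasLaw ζ (gaussianReal 0 1) μ) :
    ∫ ω, ζ ω ∂μ = 0 := by
  rw [hζ.integral_eq, integral_id_gaussianReal]

lemma integral_sq_eq_one_of_gaussianReal (hζ : HasLaw ζ (gaussianReal 0 1) μ) :
    ∫ ω, ζ ω ^ 2 ∂μ = 1 := by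
  rw [← variance_of_integral_eq_zero hζ.aemeasurable (integral_eq_zero_of_gaussianReal hζ),
    hζ.variance_eq, variance_id_gaussianReal, NNReal.coe_one]

end ProbabilityTheory.HasLaw

section MarkovRecursion

variable {Ω β E : Type*} [MeasurableSpace β] [MeasurableSpace E]
  {ξ : ℕ → Ω → E} {X : ℕ → Ω → β} {F : ℕ → β → E → β} {x : β}

lemma exists_measurable_eq_comp_of_recursion
    (hF : ∀ n, Measurable (fun p : β × E => F n p.1 p.2)) (hX0 : X 0 = fun _ => x)
    (hrec : ∀ n ω, X (n + 1) ω = F n (X n ω) (ξ n ω)) (n : ℕ) :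
    ∃ f : (Finset.range n → E) → β, Measurable f ∧ X n = fun ω => f fun i => ξ i ω := by
  induction n with
  | zero => exact ⟨fun _ => x, measurable_const, hX0⟩
  | succ n ih =>
    obtain ⟨f, hf, hXf⟩ := ih
    refine ⟨fun v => F n (f fun i => v ⟨i, by grind⟩) (v ⟨n, by simp⟩), ?_, ?_⟩
    · exact (hF n).comp ((hf.comp (by fun_prop)).prodMk (by fun_prop))
    · funext ω
      rw [hrec, hXf]

lemma indepFun_of_recursion [MeasurableSpace Ω] {μ : Measure Ω}
    (hF : ∀ n, Measurable (fun p : β × E => F n p.1 p.2)) (hX0 : X 0 = fun _ => x)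
    (hrec : ∀ n ω, X (n + 1) ω = F n (X n ω) (ξ n ω))
    (hξ : ∀ n, Measurable (ξ n)) (hindep : iIndepFun ξ μ) (n : ℕ) :
    IndepFun (X n) (ξ n) μ := by
  obtain ⟨f, hf, hXf⟩ := exists_measurable_eq_comp_of_recursion hF hX0 hrec n
  have hdisj : Disjoint (Finset.range n) {n} := by simp
  rw [hXf]
  exact (hindep.indepFun_finset _ _ hdisj hξ).comp hf (measurable_pi_apply ⟨n, by simp⟩)

end MarkovRecursion

lemma ProbabilityTheory.IndepFun.integral_mul_add_mul_sq {Ω : Type*} [MeasurableSpace Ω]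
    {μ : Measure Ω} [IsFiniteMeasure μ] {Y ζ : Ω → ℝ} (hind : IndepFun Y ζ μ) (hY : MemLp Y 2 μ)
    (hζ : MemLp ζ 2 μ) (hζ0 : ∫ ω, ζ ω ∂μ = 0) (a c : ℝ) :
    ∫ ω, (a * Y ω + c * ζ ω) ^ 2 ∂μ = a ^ 2 * ∫ ω, Y ω ^ 2 ∂μ + c ^ 2 * ∫ ω, ζ ω ^ 2 ∂μ := by
  have hcross : ∫ ω, Y ω * ζ ω ∂μ = 0 := by
    rw [← Pi.mul_def, hind.integral_mul_eq_mul_integral hY.1 hζ.1, hζ0, mul_zero]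
  have hYζ : Integrable (fun ω => Y ω * ζ ω) μ :=
    hind.integrable_mul (hY.integrable one_le_two) (hζ.integrable one_le_two)
  calc ∫ ω, (a * Y ω + c * ζ ω) ^ 2 ∂μ
      = ∫ ω, a ^ 2 * Y ω ^ 2 + 2 * a * c * (Y ω * ζ ω) + c ^ 2 * ζ ω ^ 2 ∂μ := by
        congr 1; funext ω; ring
    _ = a ^ 2 * ∫ ω, Y ω ^ 2 ∂μ + 2 * a * c * ∫ ω, Y ω * ζ ω ∂μ + c ^ 2 * ∫ ω, ζ ω ^ 2 ∂μ := by
        rw [integral_add ((hY.integrable_sq.const_mul _).fun_add (hYζ.const_mul _))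
            (hζ.integrable_sq.const_mul _),
          integral_add (hY.integrable_sq.const_mul _) (hYζ.const_mul _),
          integral_const_mul, integral_const_mul, integral_const_mul]
    _ = a ^ 2 * ∫ ω, Y ω ^ 2 ∂μ + c ^ 2 * ∫ ω, ζ ω ^ 2 ∂μ := by
        rw [hcross, mul_zero, add_zero]

lemma tendsto_of_affine_recursion {m : ℕ → ℝ} {b d : ℝ} (hb : |b| < 1)
    (hm : ∀ n, m (n + 1) = b * m n + d) : Tendsto m atTop (𝓝 (d / (1 - b))) := by
  have hb1 : 1 - b ≠ 0 := by grind [abs_lt]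
  set L := d / (1 - b) with hL
  have hfix : b * L + d = L := by rw [hL]; field_simp; ring
  have hclosed : ∀ n, m n = b ^ n * (m 0 - L) + L := by
    intro n
    induction n with
    | zero => ring
    | succ n ih => rw [hm, ih]; linear_combination hfix
  have h := ((tendsto_pow_atTop_nhds_zero_of_abs_lt_one hb).mul_const (m 0 - L)).add_const L
  rw [zero_mul, zero_add] at h
  exact h.congr fun n => (hclosed n).symm

lemma tendsto_integral_sq_of_linear_recursion {Ω : Type*} [MeasurableSpace Ω] {μ : Measure Ω}
    [IsFiniteMeasure μ] {ξ X : ℕ → Ω → ℝ} {a c x v : ℝ} (ha : |a| < 1)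
    (hX0 : X 0 = fun _ => x) (hrec : ∀ n ω, X (n + 1) ω = a * X n ω + c * ξ n ω)
    (hξ : ∀ n, Measurable (ξ n)) (hindep : iIndepFun ξ μ) (hξL2 : ∀ n, MemLp (ξ n) 2 μ)
    (hξ0 : ∀ n, ∫ ω, ξ n ω ∂μ = 0) (hξv : ∀ n, ∫ ω, ξ n ω ^ 2 ∂μ = v) :
    Tendsto (fun n => ∫ ω, X n ω ^ 2 ∂μ) atTop (𝓝 (c ^ 2 * v / (1 - a ^ 2))) := by
  have hXL2 : ∀ n, MemLp (X n) 2 μ := by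
    intro n
    induction n with
    | zero => rw [hX0]; exact memLp_const x
    | succ n ih =>
      rw [show X (n + 1) = fun ω => a * X n ω + c * ξ n ω from funext (hrec n)]
      exact (ih.const_mul a).add ((hξL2 n).const_mul c)
  have ha2 : |a ^ 2| < 1 := by rwa [abs_of_nonneg (sq_nonneg a), sq_lt_one_iff_abs_lt_one]
  refine tendsto_of_affine_recursion ha2 fun n => ?_
  simp_rw [hrec n]
  have hind : IndepFun (X n) (ξ n) μ := indepFun_of_recursion
    (F := fun _ y z => a * y + c * z) (fun _ => by fun_prop) hX0 hrec hξ hindep n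
  rw [hind.integral_mul_add_mul_sq (hXL2 n) (hξL2 n) (hξ0 n), hξv n, mul_comm (c ^ 2)]

theorem postprocessed_euler_maruyama_OU_exact_second_moment_general
    {Ω : Type*} [MeasurableSpace Ω] (μ : Measure Ω) [IsProbabilityMeasure μ]
    (γ σ h : ℝ) (hγ : 0 < γ) (hh : 0 < h) (hstab : γ * h < 2)
    (ξ : ℕ → Ω → ℝ) (hmeas : ∀ n, Measurable (ξ n))
    (hindep : iIndepFun ξ μ)
    (hgauss : ∀ n, μ.map (ξ n) = gaussianReal 0 1)
    (x : ℝ) (X : ℕ → Ω → ℝ) (hX0 : X 0 = fun _ => x)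
    (hrec : ∀ n ω, X (n + 1) ω = (1 - γ * h) * X n ω + σ * Real.sqrt h * ξ n ω)
    (Xbar : ℕ → Ω → ℝ)
    (hXbar : ∀ n ω, Xbar n ω = Real.sqrt (1 - γ * h / 2) * X n ω) :
    Tendsto (fun n => ∫ ω, (Xbar n ω) ^ 2 ∂μ) atTop (𝓝 (σ ^ 2 / (2 * γ)))
      ∧ 2 * (-γ * h) * 1 ^ 2 / ((1 + -γ * h) ^ 2 - 1) = 2 / (2 + -γ * h) := by
  have hγh : 0 < γ * h := mul_pos hγ hh
  have hlaw n : HasLaw (ξ n) (gaussianReal 0 1) μ := ⟨(hmeas n).aemeasurable, hgauss n⟩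
  have hXsq := tendsto_integral_sq_of_linear_recursion (abs_lt.2 ⟨by linarith, by linarith⟩)
    hX0 hrec hmeas hindep (fun n => (hlaw n).memLp_two_of_gaussianReal)
    (fun n => (hlaw n).integral_eq_zero_of_gaussianReal)
    (fun n => (hlaw n).integral_sq_eq_one_of_gaussianReal)
  have hXbar_sq n : ∫ ω, Xbar n ω ^ 2 ∂μ = (1 - γ * h / 2) * ∫ ω, X n ω ^ 2 ∂μ := by
    simp_rw [hXbar, mul_pow, Real.sq_sqrt (by linarith : 0 ≤ 1 - γ * h / 2)]
    exact integral_const_mul _ _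
  have hlimit : (1 - γ * h / 2) * ((σ * Real.sqrt h) ^ 2 * 1 / (1 - (1 - γ * h) ^ 2))
      = σ ^ 2 / (2 * γ) := by
    rw [mul_pow, Real.sq_sqrt hh.le]
    field_simp [(by nlinarith : 1 - (1 - γ * h) ^ 2 ≠ 0)]
    ring
  refine ⟨?_, ?_⟩
  · simpa only [hXbar_sq, hlimit] using hXsq.const_mul (1 - γ * h / 2)
  · have hz : -γ * h ≠ 0 := by linarith
    have h2 : 2 + -γ * h ≠ 0 := by linarith
    rw [show (1 + -γ * h) ^ 2 - 1 = -γ * h * (2 + -γ * h) by ring]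
    field_simp

/-- For the Euler–Maruyama scheme `X_{n+1} = (1 - γh) X_n + σ√h ξ_n`
applied to the Ornstein–Uhlenbeck equation (deterministic `X_0 = x`, i.i.d. standard
Gaussian `ξ_n`, `0 < γh < 2`), the deterministic postprocessor `X̄_n = √(1 - γh/2)·X_n`
yields `lim_{n→∞} E(X̄_n²) = σ²/(2γ)`: the `R`-function of Euler–Maruyama is
`R(z) = 2/(2+z)` and the postprocessor `C(z) = √(1 + z/2)` (with `z = -γh`) samples the
stationary second moment exactly. -/
theorem postprocessed_euler_maruyama_OU_exact_second_moment
    {Ω : Type*} [MeasurableSpace Ω] (μ : Measure Ω) [IsProbabilityMeasure μ]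
    (γ σ h : ℝ) (hγ : 0 < γ) (hσ : 0 < σ) (hh : 0 < h) (hstab : γ * h < 2)
    (ξ : ℕ → Ω → ℝ) (hmeas : ∀ n, Measurable (ξ n))
    (hindep : iIndepFun ξ μ)
    (hgauss : ∀ n, μ.map (ξ n) = gaussianReal 0 1)
    (x : ℝ) (X : ℕ → Ω → ℝ) (hX0 : X 0 = fun _ => x)
    (hrec : ∀ n ω, X (n + 1) ω = (1 - γ * h) * X n ω + σ * Real.sqrt h * ξ n ω)
    (Xbar : ℕ → Ω → ℝ)
    (hXbar : ∀ n ω, Xbar n ω = Real.sqrt (1 - γ * h / 2) * X n ω) :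
    Tendsto (fun n => ∫ ω, (Xbar n ω) ^ 2 ∂μ) atTop (𝓝 (σ ^ 2 / (2 * γ)))
      ∧ 2 * (-γ * h) * 1 ^ 2 / ((1 + -γ * h) ^ 2 - 1) = 2 / (2 + -γ * h) :=
  postprocessed_euler_maruyama_OU_exact_second_moment_general μ γ σ h hγ hh hstab ξ hmeas hindep
    hgauss x X hX0 hrec Xbar hXbar
end

section
/- Fix h > 0, σ > 0, x ∈ ℝ and θ > 0. For the θ-method applied to dX = −γX dt + σ dW, one step from X_0 = x gives E(X_1²) = A_θ(−γh)² x² + B_θ(−γh)² σ² h with A_θ(z) = (1+(1−θ)z)/(1−θz) and B_θ(z) = 1/(1−θz). Then lim_{γ→+∞} E(X_1²) = ((θ−1)/θ)² x², and this limit equals 0 for every x ∈ ℝ if and only if θ = 1. Hence, among the θ-methods with θ > 0, exactly the implicit Euler method θ = 1 is L-stable. -/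
open MeasureTheory ProbabilityTheory Filter Topology
open scoped NNReal

/-! For a standard Gaussian `ξ`, `E (a + c ξ)² = a² + c²`, which gives the one-step second
moment. Both `A_θ(-γh)` and `B_θ(-γh)` are quotients of affine functions of `γ`, so as
`γ → ∞` they tend to the quotients of the leading coefficients, `(θ - 1) / θ` and `0`. -/

lemma integral_sq_gaussianReal (m : ℝ) (v : ℝ≥0) :
    ∫ x, x ^ 2 ∂gaussianReal m v = m ^ 2 + v := by
  have h := variance_eq_sub (memLp_id_gaussianReal (μ := m) (v := v) 2)
  simp only [variance_id_gaussianReal, Pi.pow_apply, id, integral_id_gaussianReal] at h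
  linarith

lemma integral_const_add_mul_sq_gaussianReal (m : ℝ) (v : ℝ≥0) (a c : ℝ) :
    ∫ x, (a + c * x) ^ 2 ∂gaussianReal m v = (a + c * m) ^ 2 + c ^ 2 * v := by
  have hint_id : Integrable (fun x : ℝ => x) (gaussianReal m v) :=
    (memLp_id_gaussianReal 1).integrable le_rfl
  have hint_sq : Integrable (fun x : ℝ => x ^ 2) (gaussianReal m v) :=
    (memLp_id_gaussianReal 2).integrable_sq
  have hexp : ∀ x : ℝ, (a + c * x) ^ 2 = a ^ 2 + (2 * a * c * x + c ^ 2 * x ^ 2) := fun x => by ring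
  simp_rw [hexp]
  rw [integral_add (integrable_const _) ((hint_id.const_mul _).fun_add (hint_sq.const_mul _)),
    integral_add (hint_id.const_mul _) (hint_sq.const_mul _), integral_const_mul, integral_const_mul,
    integral_const, integral_id_gaussianReal, integral_sq_gaussianReal]
  simp only [probReal_univ, smul_eq_mul, one_mul]
  ring

lemma tendsto_affine_div_affine_atTop (p q r s : ℝ) (hs : s ≠ 0) :
    Tendsto (fun γ => (p + q * γ) / (r + s * γ)) atTop (𝓝 (q / s)) := by
  have hlim : Tendsto (fun γ : ℝ => (p * γ⁻¹ + q) / (r * γ⁻¹ + s)) atTop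
      (𝓝 ((p * 0 + q) / (r * 0 + s))) :=
    ((tendsto_inv_atTop_zero.const_mul p).add_const q).div
      ((tendsto_inv_atTop_zero.const_mul r).add_const s) (by simpa using hs)
  rw [mul_zero, mul_zero, zero_add, zero_add] at hlim
  refine hlim.congr' ?_
  filter_upwards [eventually_gt_atTop (0 : ℝ)] with γ hγ
  rw [← mul_div_mul_right _ _ hγ.ne']
  congr 1 <;> field_simp

lemma theta_sq_mul_sq_eq_zero_iff {θ : ℝ} (hθ : θ ≠ 0) :
    (∀ x : ℝ, ((θ - 1) / θ) ^ 2 * x ^ 2 = 0) ↔ θ = 1 := by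
  refine ⟨fun H => ?_, fun h x => by simp [h]⟩
  simpa [hθ, sub_eq_zero] using H 1

theorem theta_method_L_stability_iff_general
    {Ω : Type*} [MeasurableSpace Ω] (μ : Measure Ω)
    (ξ₀ : Ω → ℝ) (hmeas : Measurable ξ₀) (hgauss : μ.map ξ₀ = gaussianReal 0 1)
    (h σ θ : ℝ) (hh : 0 < h) (hθ : 0 < θ)
    (A B : ℝ → ℝ)
    (hA : ∀ z, A z = (1 + (1 - θ) * z) / (1 - θ * z))
    (hB : ∀ z, B z = 1 / (1 - θ * z))
    (X₁ : ℝ → ℝ → Ω → ℝ)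
    (hX₁ : ∀ x γ ω, X₁ x γ ω = A (-γ * h) * x + B (-γ * h) * Real.sqrt h * σ * ξ₀ ω) :
    (∀ x γ : ℝ, 0 < γ →
        ∫ ω, (X₁ x γ ω) ^ 2 ∂μ = (A (-γ * h)) ^ 2 * x ^ 2 + (B (-γ * h)) ^ 2 * σ ^ 2 * h)
      ∧ (∀ x : ℝ, Tendsto (fun γ => ∫ ω, (X₁ x γ ω) ^ 2 ∂μ) atTop
          (𝓝 (((θ - 1) / θ) ^ 2 * x ^ 2)))
      ∧ ((∀ x : ℝ, ((θ - 1) / θ) ^ 2 * x ^ 2 = 0) ↔ θ = 1) := by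
  have hθh : θ * h ≠ 0 := mul_ne_zero hθ.ne' hh.ne'
  have second_moment (x γ : ℝ) : ∫ ω, (X₁ x γ ω) ^ 2 ∂μ
      = A (-γ * h) ^ 2 * x ^ 2 + B (-γ * h) ^ 2 * σ ^ 2 * h := by
    calc ∫ ω, (X₁ x γ ω) ^ 2 ∂μ
        = ∫ y, (A (-γ * h) * x + B (-γ * h) * √h * σ * y) ^ 2 ∂gaussianReal 0 1 := by
          rw [← hgauss, integral_map hmeas.aemeasurable (by fun_prop)]
          simp_rw [hX₁]
      _ = A (-γ * h) ^ 2 * x ^ 2 + B (-γ * h) ^ 2 * σ ^ 2 * h := by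
          rw [integral_const_add_mul_sq_gaussianReal]
          simp only [mul_zero, add_zero, NNReal.coe_one, mul_one, mul_pow, Real.sq_sqrt hh.le]
          ring
  have tendsto_A : Tendsto (fun γ => A (-γ * h)) atTop (𝓝 ((θ - 1) / θ)) := by
    have := tendsto_affine_div_affine_atTop 1 ((θ - 1) * h) 1 (θ * h) hθh
    rw [mul_div_mul_right _ _ hh.ne'] at this
    convert this using 2 with γ
    rw [hA]
    ring_nf
  have tendsto_B : Tendsto (fun γ => B (-γ * h)) atTop (𝓝 0) := by
    have := tendsto_affine_div_affine_atTop 1 0 1 (θ * h) hθh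
    rw [zero_div] at this
    convert this using 2 with γ
    rw [hB]
    ring_nf
  refine ⟨fun x γ _ => second_moment x γ, fun x => ?_, theta_sq_mul_sq_eq_zero_iff hθ.ne'⟩
  simp_rw [second_moment]
  simpa using ((tendsto_A.pow 2).mul_const (x ^ 2)).add
    (((tendsto_B.pow 2).mul_const (σ ^ 2)).mul_const h)

/-- Fix `h > 0`, `σ > 0` and `θ > 0`.  For the θ-method applied to
`dX = -γX dt + σ dW`, one step from `X_0 = x` gives
`E(X_1²) = A_θ(-γh)² x² + B_θ(-γh)² σ² h` with `A_θ(z) = (1+(1-θ)z)/(1-θz)` and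
`B_θ(z) = 1/(1-θz)`.  Then `lim_{γ→+∞} E(X_1²) = ((θ-1)/θ)² x²`, and this limit vanishes
for every `x` iff `θ = 1`: among the θ-methods with `θ > 0`, exactly the implicit Euler
method is L-stable. -/
theorem theta_method_L_stability_iff
    {Ω : Type*} [MeasurableSpace Ω] (μ : Measure Ω) [IsProbabilityMeasure μ]
    (ξ₀ : Ω → ℝ) (hmeas : Measurable ξ₀) (hgauss : μ.map ξ₀ = gaussianReal 0 1)
    (h σ θ : ℝ) (hh : 0 < h) (hσ : 0 < σ) (hθ : 0 < θ)
    (A B : ℝ → ℝ)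
    (hA : ∀ z, A z = (1 + (1 - θ) * z) / (1 - θ * z))
    (hB : ∀ z, B z = 1 / (1 - θ * z))
    (X₁ : ℝ → ℝ → Ω → ℝ)
    (hX₁ : ∀ x γ ω, X₁ x γ ω = A (-γ * h) * x + B (-γ * h) * Real.sqrt h * σ * ξ₀ ω) :
    (∀ x γ : ℝ, 0 < γ →
        ∫ ω, (X₁ x γ ω) ^ 2 ∂μ = (A (-γ * h)) ^ 2 * x ^ 2 + (B (-γ * h)) ^ 2 * σ ^ 2 * h)
      ∧ (∀ x : ℝ, Tendsto (fun γ => ∫ ω, (X₁ x γ ω) ^ 2 ∂μ) atTop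
          (𝓝 (((θ - 1) / θ) ^ 2 * x ^ 2)))
      ∧ ((∀ x : ℝ, ((θ - 1) / θ) ^ 2 * x ^ 2 = 0) ↔ θ = 1) :=
  theta_method_L_stability_iff_general μ ξ₀ hmeas hgauss h σ θ hh hθ A B hA hB X₁ hX₁
end

section
/- In the Brownian dynamics setting, the following integration-by-parts identity holds: ⟨ σ² Σ_{i=1}^d φ''(f'e_i, e_i) ⟩ = ⟨ −φ'( σ² Σ_{i=1}^d f''(e_i,e_i) + 2 f'f ) ⟩, where both sides are integrals against the unnormalized Gibbs density ρ. -/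
open MeasureTheory Real
open scoped RealInnerProductSpace

set_option maxHeartbeats 1000000

namespace IBP17

variable {d : ℕ}

local notation "E" => EuclideanSpace ℝ (Fin d)

lemma fderiv_eq_inner_gradient (V : E → ℝ) (hV : Differentiable ℝ V) (x v : E) :
    fderiv ℝ V x v = ⟪gradient V x, v⟫ := by
  have h := ((hV x).hasGradientAt).hasFDerivAt
  rw [h.fderiv]
  simp [InnerProductSpace.toDual_apply_apply]

lemma gradient_contDiff (V : E → ℝ) (hV : ContDiff ℝ (⊤ : ℕ∞) V) :
    ContDiff ℝ (⊤ : ℕ∞) (fun x => gradient V x) := by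
  have h1 : ContDiff ℝ (⊤ : ℕ∞) (fderiv ℝ V) := hV.fderiv_right (by simp)
  have heq : (fun x => gradient V x)
      = fun x => (InnerProductSpace.toDual ℝ E).symm (fderiv ℝ V x) := by
    funext x
    have h := ((hV.differentiable (by simp) x).hasGradientAt).hasFDerivAt
    rw [h.fderiv]; exact ((InnerProductSpace.toDual ℝ E).symm_apply_apply _).symm
  rw [heq]
  exact (InnerProductSpace.toDual ℝ E).symm.contDiff.comp h1

lemma norm_fderiv_eq_one {F : Type*} [NormedAddCommGroup F] [NormedSpace ℝ F]
    (g : E → F) (x : E) : ‖fderiv ℝ g x‖ = ‖iteratedFDeriv ℝ 1 g x‖ := by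
  rw [← norm_iteratedFDeriv_fderiv (n := 0), norm_iteratedFDeriv_zero]

lemma norm_fderiv2_eq_two {F : Type*} [NormedAddCommGroup F] [NormedSpace ℝ F]
    (g : E → F) (x : E) : ‖fderiv ℝ (fderiv ℝ g) x‖ = ‖iteratedFDeriv ℝ 2 g x‖ := by
  rw [norm_fderiv_eq_one, norm_iteratedFDeriv_fderiv]

lemma gauss_int (a : ℝ) (ha : 0 < a) :
    Integrable (fun x : E => Real.exp (-a * ‖x‖ ^ 2)) := by
  have h := (GaussianFourier.integrable_cexp_neg_mul_sq_norm_add (V := E)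
    (b := (a : ℂ)) (by simpa) 0 0).norm
  apply h.congr
  filter_upwards with x
  rw [Complex.norm_exp]
  congr 1
  simp [← Complex.ofReal_pow]

lemma one_add_pow_le (t : ℝ) (ht : 0 ≤ t) (k : ℕ) (a : ℝ) (ha : 0 < a) :
    (1 + t) ^ k ≤ (k.factorial * Real.exp (2 + 1 / (2 * a))) * Real.exp (a / 2 * t ^ 2) := by
  have h1 : (1 + t) ^ k / k.factorial ≤ Real.exp (1 + t) :=
    Real.pow_div_factorial_le_exp (x := 1 + t) (by linarith) k
  have hfac : (0 : ℝ) < k.factorial := by exact_mod_cast k.factorial_pos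
  have h2 : (1 + t) ^ k ≤ k.factorial * Real.exp (1 + t) := by
    rw [div_le_iff₀ hfac] at h1; linarith [h1]
  have h3 : 1 + t ≤ (2 + 1 / (2 * a)) + a / 2 * t ^ 2 := by
    have key : t ≤ a / 2 * t ^ 2 + 1 / (2 * a) := by
      rw [← sub_nonneg]
      have hq : a / 2 * t ^ 2 + 1 / (2 * a) - t = (a * t - 1) ^ 2 / (2 * a) := by
        field_simp; ring
      rw [hq]; positivity
    linarith
  calc (1 + t) ^ k ≤ k.factorial * Real.exp (1 + t) := h2
    _ ≤ k.factorial * Real.exp ((2 + 1 / (2 * a)) + a / 2 * t ^ 2) :=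
        mul_le_mul_of_nonneg_left (Real.exp_le_exp.2 h3) (by positivity)
    _ = (k.factorial * Real.exp (2 + 1 / (2 * a))) * Real.exp (a / 2 * t ^ 2) := by
        rw [Real.exp_add]; ring

lemma gauss_poly (k : ℕ) (a : ℝ) (ha : 0 < a) :
    Integrable (fun x : E => (1 + ‖x‖) ^ k * Real.exp (-a * ‖x‖ ^ 2)) := by
  set D : ℝ := k.factorial * Real.exp (2 + 1 / (2 * a)) with hD
  have hD0 : 0 < D := by positivity
  have hint := (gauss_int (d := d) (a / 2) (by linarith)).const_mul D
  apply hint.mono'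
  · apply Continuous.aestronglyMeasurable
    exact ((continuous_const.add continuous_norm).pow k).mul
      (Real.continuous_exp.comp (continuous_const.mul (continuous_norm.pow 2)))
  · filter_upwards with x
    have h1 : (1 + ‖x‖) ^ k ≤ D * Real.exp (a / 2 * ‖x‖ ^ 2) :=
      one_add_pow_le ‖x‖ (norm_nonneg x) k a ha
    have h2 : (0:ℝ) < Real.exp (-a * ‖x‖ ^ 2) := Real.exp_pos _
    have h3 : ‖(1 + ‖x‖) ^ k * Real.exp (-a * ‖x‖ ^ 2)‖
        = (1 + ‖x‖) ^ k * Real.exp (-a * ‖x‖ ^ 2) := by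
      rw [Real.norm_eq_abs, abs_of_nonneg]; positivity
    rw [h3]
    calc (1 + ‖x‖) ^ k * Real.exp (-a * ‖x‖ ^ 2)
        ≤ (D * Real.exp (a / 2 * ‖x‖ ^ 2)) * Real.exp (-a * ‖x‖ ^ 2) := by
          gcongr
      _ = D * Real.exp (-(a / 2) * ‖x‖ ^ 2) := by
          rw [mul_assoc, ← Real.exp_add]; ring_nf

/-- Lower bound for `V` from dissipativity. -/
lemma V_lower_bound (V : E → ℝ) (hV : ContDiff ℝ (⊤ : ℕ∞) V)
    (β C₀ : ℝ) (hβ : 0 < β) (hC₀ : 0 ≤ C₀)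
    (hdissip : ∀ x : E, β * ‖x‖ ^ 2 - C₀ ≤ ⟪x, gradient V x⟫) :
    ∃ C₁ : ℝ, ∀ x : E, β / 4 * ‖x‖ ^ 2 - C₁ ≤ V x := by
  have hVd : Differentiable ℝ V := hV.differentiable (by simp)
  set R : ℝ := max 1 (Real.sqrt (2 * C₀ / β)) with hRdef
  have hR1 : (1 : ℝ) ≤ R := le_max_left _ _
  have hR0 : (0 : ℝ) < R := by linarith
  have hR2 : 2 * C₀ / β ≤ R ^ 2 := by
    have h := Real.sq_sqrt (by positivity : (0:ℝ) ≤ 2 * C₀ / β)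
    calc 2 * C₀ / β = Real.sqrt (2 * C₀ / β) ^ 2 := h.symm
      _ ≤ R ^ 2 := by
          apply pow_le_pow_left₀ (Real.sqrt_nonneg _) (le_max_right _ _)
  obtain ⟨y₀, hy₀K, hy₀min⟩ := (isCompact_closedBall (0 : E) R).exists_isMinOn
    ⟨0, by simp [hR0.le]⟩ hV.continuous.continuousOn
  set m : ℝ := V y₀ with hm
  refine ⟨β / 4 * R ^ 2 - m, fun x => ?_⟩
  rcases le_or_gt ‖x‖ R with hxR | hxR
  · have hxK : x ∈ Metric.closedBall (0 : E) R := by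
      simpa [Metric.mem_closedBall, dist_eq_norm] using hxR
    have := hy₀min hxK
    have hsq : ‖x‖ ^ 2 ≤ R ^ 2 := by
      apply pow_le_pow_left₀ (norm_nonneg x) hxR
    simp only [Set.mem_setOf_eq] at this
    nlinarith [this]
  · -- ‖x‖ > R
    have hx0 : (0:ℝ) < ‖x‖ := lt_trans hR0 hxR
    set r : ℝ := ‖x‖ with hr
    set t₀ : ℝ := R / r with ht₀
    have ht₀pos : 0 < t₀ := by positivity
    have ht₀lt : t₀ < 1 := by
      rw [ht₀, div_lt_one hx0]; exact hxR
    set g : ℝ → ℝ := fun t => V (t • x) - (β / 4 * r ^ 2) * t ^ 2 with hg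
    have hasg : ∀ t : ℝ, HasDerivAt g
        (fderiv ℝ V (t • x) x - (β / 4 * r ^ 2) * (2 * t)) t := by
      intro t
      have h1 : HasDerivAt (fun s : ℝ => s • x) x t := by
        simpa using (hasDerivAt_id t).smul_const x
      have h2 : HasDerivAt (fun s : ℝ => V (s • x)) (fderiv ℝ V (t • x) x) t := by
        exact (hVd (t • x)).hasFDerivAt.comp_hasDerivAt t h1
      have h3 : HasDerivAt (fun t : ℝ => (β / 4 * r ^ 2) * t ^ 2)
          ((β / 4 * r ^ 2) * (2 * t)) t := by
        simpa using ((hasDerivAt_pow 2 t).const_mul (β / 4 * r ^ 2))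
      exact h2.sub h3
    have hmono : MonotoneOn g (Set.Icc t₀ 1) := by
      apply monotoneOn_of_deriv_nonneg (convex_Icc t₀ 1)
      · exact ((hV.continuous.comp ((continuous_id.smul continuous_const : Continuous fun t : ℝ => t • x))).sub
          (continuous_const.mul (continuous_pow 2))).continuousOn
      · intro t _
        exact (hasg t).differentiableAt.differentiableWithinAt
      · intro t ht
        rw [interior_Icc] at ht
        rw [(hasg t).deriv]
        have htpos : 0 < t := lt_trans ht₀pos ht.1
        have htr : R ≤ t * r := by
          rw [ht₀] at ht
          have := ht.1.le
          calc R = (R / r) * r := by field_simp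
            _ ≤ t * r := by gcongr
        have hinner : β * ‖t • x‖ ^ 2 - C₀ ≤ ⟪t • x, gradient V (t • x)⟫ :=
          hdissip (t • x)
        have hns : ‖t • x‖ = t * r := by
          rw [norm_smul, Real.norm_eq_abs, abs_of_pos htpos]
        have hsmul : ⟪t • x, gradient V (t • x)⟫ = t * ⟪x, gradient V (t • x)⟫ :=
          real_inner_smul_left _ _ _
        have hfd : fderiv ℝ V (t • x) x = ⟪x, gradient V (t • x)⟫ := by
          rw [fderiv_eq_inner_gradient V hVd]
          exact real_inner_comm _ _
        rw [hfd]
        -- from dissipativity: t * ⟪x, grad⟫ ≥ β t² r² - C₀ and (β/2) t²r² ≥ C₀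
        have h2 : β * (t * r) ^ 2 - C₀ ≤ t * ⟪x, gradient V (t • x)⟫ := by
          rw [← hsmul, ← hns]; simpa [hns] using hinner
        have hC : C₀ ≤ β / 2 * (t * r) ^ 2 := by
          have hRsq : R ^ 2 ≤ (t * r) ^ 2 := by
            apply pow_le_pow_left₀ hR0.le htr
          have : 2 * C₀ / β ≤ (t * r) ^ 2 := le_trans hR2 hRsq
          rw [div_le_iff₀ hβ] at this
          nlinarith
        have h4 : β / 2 * (t * r) ^ 2 ≤ t * ⟪x, gradient V (t • x)⟫ := by nlinarith
        have h5 : (β / 4 * r ^ 2) * (2 * t) * t ≤ β / 2 * (t * r) ^ 2 := by nlinarith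
        have h6 := le_trans h5 h4
        -- divide by t > 0
        nlinarith [mul_le_mul_of_nonneg_left (le_trans h5 h4) (le_of_lt (inv_pos.2 htpos))]
    have hkey : g t₀ ≤ g 1 := hmono (Set.mem_Icc.2 ⟨le_refl t₀, ht₀lt.le⟩)
      (Set.mem_Icc.2 ⟨ht₀lt.le, le_refl 1⟩) ht₀lt.le
    have hnt₀x : ‖t₀ • x‖ = R := by
      rw [norm_smul, Real.norm_eq_abs, abs_of_pos ht₀pos, ht₀]
      field_simp
      exact hr.symm
    have hmem : t₀ • x ∈ Metric.closedBall (0 : E) R := by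
      rw [Metric.mem_closedBall, dist_zero_right, hnt₀x]
    have hVm : m ≤ V (t₀ • x) := hy₀min hmem
    have hg1 : g 1 = V x - β / 4 * r ^ 2 := by simp [hg]
    have hgt₀ : g t₀ = V (t₀ • x) - β / 4 * R ^ 2 := by
      have : r ^ 2 * t₀ ^ 2 = R ^ 2 := by
        rw [ht₀]; field_simp
      simp only [hg]
      nlinarith [this]
    rw [hg1, hgt₀] at hkey
    nlinarith [hkey, hVm]


lemma growth_mul {C₁ C₂ u v t : ℝ} {a b : ℕ} (hu : 0 ≤ u) (hv : 0 ≤ v)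
    (h1 : u ≤ C₁ * (1 + t) ^ a) (h2 : v ≤ C₂ * (1 + t) ^ b) :
    u * v ≤ (C₁ * C₂) * (1 + t) ^ (a + b) := by
  calc u * v ≤ (C₁ * (1 + t) ^ a) * (C₂ * (1 + t) ^ b) :=
        mul_le_mul h1 h2 hv (le_trans hu h1)
    _ = (C₁ * C₂) * (1 + t) ^ (a + b) := by rw [pow_add]; ring

lemma growth_conv {C u t : ℝ} {s : ℕ} (ht : 0 ≤ t) (h : u ≤ C * (1 + t ^ s)) :
    u ≤ (2 * max C 0) * (1 + t) ^ s := by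
  have hm : 0 ≤ max C 0 := le_max_right _ _
  have h1 : C * (1 + t ^ s) ≤ max C 0 * (1 + t ^ s) :=
    mul_le_mul_of_nonneg_right (le_max_left _ _) (by positivity)
  have ht1 : t ^ s ≤ (1 + t) ^ s := pow_le_pow_left₀ ht (by linarith) s
  have ht2 : (1 : ℝ) ≤ (1 + t) ^ s := one_le_pow₀ (by linarith)
  calc u ≤ C * (1 + t ^ s) := h
    _ ≤ max C 0 * (1 + t ^ s) := h1
    _ ≤ max C 0 * (2 * (1 + t) ^ s) := by
        apply mul_le_mul_of_nonneg_left _ hm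
        linarith
    _ = (2 * max C 0) * (1 + t) ^ s := by ring

end IBP17

open IBP17


/-- Brownian dynamics setting (`f = -∇V`, `ρ = exp(-2V/σ²)`, smooth
data with polynomial growth of all derivatives and dissipativity of `V`).  Integration
by parts yields `⟨σ² Σᵢ φ''(f'eᵢ,eᵢ)⟩ = ⟨-φ'(σ² Σᵢ f''(eᵢ,eᵢ) + 2 f'f)⟩`, where
`⟨u⟩ = ∫ u(x) ρ(x) dx` and `e₁,…,e_d` is the canonical basis. -/
theorem ibp_identity_phi2_jacobian
    (d : ℕ) (hd : 1 ≤ d) (σ : ℝ) (hσ : 0 < σ)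
    (V : EuclideanSpace ℝ (Fin d) → ℝ) (hV : ContDiff ℝ (⊤ : ℕ∞) V)
    (hVgrowth : ∀ n : ℕ, ∃ (C : ℝ) (s : ℕ), ∀ x,
      ‖iteratedFDeriv ℝ n (fun y => gradient V y) x‖ ≤ C * (1 + ‖x‖ ^ s))
    (β C₀ : ℝ) (hβ : 0 < β) (hC₀ : 0 ≤ C₀)
    (hdissip : ∀ x, β * ‖x‖ ^ 2 - C₀ ≤ ⟪x, gradient V x⟫)
    (f : EuclideanSpace ℝ (Fin d) → EuclideanSpace ℝ (Fin d))
    (hf : ∀ x, f x = -gradient V x)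
    (ρ : EuclideanSpace ℝ (Fin d) → ℝ)
    (hρ : ∀ x, ρ x = Real.exp (-2 * V x / σ ^ 2))
    (φ : EuclideanSpace ℝ (Fin d) → ℝ) (hφ : ContDiff ℝ (⊤ : ℕ∞) φ)
    (hφgrowth : ∀ n : ℕ, ∃ (C : ℝ) (s : ℕ), ∀ x,
      ‖iteratedFDeriv ℝ n φ x‖ ≤ C * (1 + ‖x‖ ^ s))
    (e : Fin d → EuclideanSpace ℝ (Fin d))
    (he : ∀ i, e i = EuclideanSpace.single i 1) :
    ∫ x, (σ ^ 2 * ∑ i : Fin d, iteratedFDeriv ℝ 2 φ x ![fderiv ℝ f x (e i), e i]) * ρ x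
      = ∫ x, -(fderiv ℝ φ x
          (σ ^ 2 • (∑ i : Fin d, iteratedFDeriv ℝ 2 f x ![e i, e i])
            + (2 : ℝ) • fderiv ℝ f x (f x))) * ρ x := by
  classical
  have hσ2 : (0:ℝ) < σ ^ 2 := by positivity
  -- smoothness
  have hfeq : f = fun x => -(gradient V x) := funext hf
  have hgradC : ContDiff ℝ (⊤ : ℕ∞) (fun x => gradient V x) := gradient_contDiff V hV
  have hfC : ContDiff ℝ (⊤ : ℕ∞) f := by rw [hfeq]; exact hgradC.neg
  have hφ' : ContDiff ℝ (⊤ : ℕ∞) (fderiv ℝ φ) := hφ.fderiv_right (by simp)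
  have hf' : ContDiff ℝ (⊤ : ℕ∞) (fderiv ℝ f) := hfC.fderiv_right (by simp)
  have hφ'' : ContDiff ℝ (⊤ : ℕ∞) (fderiv ℝ (fderiv ℝ φ)) := hφ'.fderiv_right (by simp)
  have hf'' : ContDiff ℝ (⊤ : ℕ∞) (fderiv ℝ (fderiv ℝ f)) := hf'.fderiv_right (by simp)
  have hφ'd : ∀ x, HasFDerivAt (fderiv ℝ φ) (fderiv ℝ (fderiv ℝ φ) x) x :=
    fun x => (hφ'.differentiable (by simp) x).hasFDerivAt
  have hf'd : ∀ x, HasFDerivAt (fderiv ℝ f) (fderiv ℝ (fderiv ℝ f) x) x :=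
    fun x => (hf'.differentiable (by simp) x).hasFDerivAt
  have hVd : Differentiable ℝ V := hV.differentiable (by simp)
  -- basis facts
  have he_norm : ∀ i, ‖e i‖ = 1 := by
    intro i; rw [he i, EuclideanSpace.norm_single]; norm_num
  have hbasis : ∀ y : EuclideanSpace ℝ (Fin d), ∑ i, ⟪y, e i⟫ • e i = y := by
    intro y
    have hb := (EuclideanSpace.basisFun (Fin d) ℝ).sum_repr' y
    simp only [EuclideanSpace.basisFun_apply] at hb
    calc ∑ i, ⟪y, e i⟫ • e i = ∑ i, ⟪EuclideanSpace.single i (1:ℝ), y⟫ • EuclideanSpace.single i (1:ℝ) := by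
          apply Finset.sum_congr rfl
          intro i _
          rw [he i, real_inner_comm]
      _ = y := hb
  -- ρ facts
  have hρd : ∀ x, HasFDerivAt ρ ((ρ x * (-2 / σ ^ 2)) • fderiv ℝ V x) x := by
    intro x
    have hρdef : ρ = fun y => Real.exp (-2 * V y / σ ^ 2) := funext hρ
    rw [hρdef]
    show HasFDerivAt _ ((Real.exp (-2 * V x / σ ^ 2) * (-2 / σ ^ 2)) • fderiv ℝ V x) x
    have h : HasFDerivAt (fun y => -2 * V y / σ ^ 2) ((-2 / σ ^ 2) • fderiv ℝ V x) x := by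
      have h2 := (hVd x).hasFDerivAt.const_mul (-2 / σ ^ 2)
      have hfun : (fun y => -2 * V y / σ ^ 2) = fun y => -2 / σ ^ 2 * V y := by
        funext y; ring
      rw [hfun]; exact h2
    have h3 := h.exp
    rw [smul_smul] at h3
    exact h3
  have hρdiff : Differentiable ℝ ρ := fun x => (hρd x).differentiableAt
  have hρpos : ∀ x, 0 < ρ x := fun x => by rw [hρ]; exact Real.exp_pos _
  have hρcont : Continuous ρ := hρdiff.continuous
  have hρfd : ∀ x v, fderiv ℝ ρ x v = 2 / σ ^ 2 * ⟪f x, v⟫ * ρ x := by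
    intro x v
    rw [(hρd x).fderiv]
    have h1 : fderiv ℝ V x v = -⟪f x, v⟫ := by
      rw [fderiv_eq_inner_gradient V hVd, hf x, inner_neg_left, neg_neg]
    simp only [ContinuousLinearMap.coe_smul', Pi.smul_apply, smul_eq_mul, h1]
    field_simp
  -- integrability master lemma
  obtain ⟨C₁, hVlb⟩ := V_lower_bound V hV β C₀ hβ hC₀ hdissip
  set aa : ℝ := β / (2 * σ ^ 2) with haadef
  have haa : 0 < aa := by positivity
  have hρub : ∀ x, ρ x ≤ Real.exp (2 * C₁ / σ ^ 2) * Real.exp (-aa * ‖x‖ ^ 2) := by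
    intro x
    rw [hρ x, ← Real.exp_add]
    apply Real.exp_le_exp.2
    have hx := hVlb x
    have haaσ : aa * σ ^ 2 = β / 2 := by rw [haadef]; field_simp
    rw [div_le_iff₀ hσ2]
    have hexp : (2 * C₁ / σ ^ 2 + -aa * ‖x‖ ^ 2) * σ ^ 2
        = 2 * C₁ - (aa * σ ^ 2) * ‖x‖ ^ 2 := by field_simp; ring
    rw [hexp, haaσ]
    linarith
  have key : ∀ (h : EuclideanSpace ℝ (Fin d) → ℝ) (C : ℝ) (k : ℕ), Continuous h →
      (∀ x, |h x| ≤ C * (1 + ‖x‖) ^ k) → Integrable (fun x => h x * ρ x) := by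
    intro h C k hc hb
    set K := Real.exp (2 * C₁ / σ ^ 2) with hK
    have hK0 : 0 < K := Real.exp_pos _
    have hint := (gauss_poly (d := d) k aa haa).const_mul (C * K)
    apply hint.mono' ((hc.mul hρcont).aestronglyMeasurable)
    filter_upwards with x
    have h1 : ‖h x * ρ x‖ = |h x| * ρ x := by
      rw [norm_mul, Real.norm_eq_abs, Real.norm_eq_abs, abs_of_pos (hρpos x)]
    rw [Pi.mul_apply, h1]
    calc |h x| * ρ x ≤ (C * (1 + ‖x‖) ^ k) * (K * Real.exp (-aa * ‖x‖ ^ 2)) :=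
          mul_le_mul (hb x) (hρub x) (hρpos x).le
            (le_trans (abs_nonneg _) (hb x))
      _ = C * K * ((1 + ‖x‖) ^ k * Real.exp (-aa * ‖x‖ ^ 2)) := by ring
  -- growth bounds
  obtain ⟨A1', a1, hA1'⟩ := hφgrowth 1
  obtain ⟨A2', a2, hA2'⟩ := hφgrowth 2
  obtain ⟨B0', b0, hB0'⟩ := hVgrowth 0
  obtain ⟨B1', b1, hB1'⟩ := hVgrowth 1
  obtain ⟨B2', b2, hB2'⟩ := hVgrowth 2
  set A1 := 2 * max A1' 0 with hA1def
  set A2 := 2 * max A2' 0 with hA2def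
  set B0 := 2 * max B0' 0 with hB0def
  set B1 := 2 * max B1' 0 with hB1def
  set B2 := 2 * max B2' 0 with hB2def
  have hA1 : ∀ x, ‖fderiv ℝ φ x‖ ≤ A1 * (1 + ‖x‖) ^ a1 := by
    intro x
    rw [norm_fderiv_eq_one]
    exact growth_conv (norm_nonneg x) (hA1' x)
  have hA2 : ∀ x, ‖fderiv ℝ (fderiv ℝ φ) x‖ ≤ A2 * (1 + ‖x‖) ^ a2 := by
    intro x
    rw [norm_fderiv2_eq_two]
    exact growth_conv (norm_nonneg x) (hA2' x)
  have hnegnorm : ∀ (n : ℕ) x, ‖iteratedFDeriv ℝ n f x‖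
      = ‖iteratedFDeriv ℝ n (fun y => gradient V y) x‖ := by
    intro n x
    have h1 : f = -(fun y => gradient V y) := hfeq
    rw [h1, iteratedFDeriv_neg_apply, norm_neg]
  have hB0 : ∀ x, ‖f x‖ ≤ B0 * (1 + ‖x‖) ^ b0 := by
    intro x
    have h1 : ‖f x‖ = ‖iteratedFDeriv ℝ 0 (fun y => gradient V y) x‖ := by
      rw [← hnegnorm 0 x, norm_iteratedFDeriv_zero]
    rw [h1]
    exact growth_conv (norm_nonneg x) (hB0' x)
  have hB1 : ∀ x, ‖fderiv ℝ f x‖ ≤ B1 * (1 + ‖x‖) ^ b1 := by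
    intro x
    rw [norm_fderiv_eq_one, hnegnorm 1 x]
    exact growth_conv (norm_nonneg x) (hB1' x)
  have hB2 : ∀ x, ‖fderiv ℝ (fderiv ℝ f) x‖ ≤ B2 * (1 + ‖x‖) ^ b2 := by
    intro x
    rw [norm_fderiv2_eq_two, hnegnorm 2 x]
    exact growth_conv (norm_nonneg x) (hB2' x)
  -- continuity
  have hcφ' : Continuous (fderiv ℝ φ) := hφ'.continuous
  have hcφ'' : Continuous (fderiv ℝ (fderiv ℝ φ)) := hφ''.continuous
  have hcf : Continuous f := hfC.continuous
  have hcf' : Continuous (fderiv ℝ f) := hf'.continuous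
  have hcf'' : Continuous (fderiv ℝ (fderiv ℝ f)) := hf''.continuous
  -- the vector field w
  set w : Fin d → EuclideanSpace ℝ (Fin d) → ℝ :=
    fun i x => fderiv ℝ φ x (fderiv ℝ f x (e i)) with hwdef
  have hwd : ∀ i x, HasFDerivAt (w i)
      ((fderiv ℝ φ x).comp ((fderiv ℝ (fderiv ℝ f) x).flip (e i))
        + (fderiv ℝ (fderiv ℝ φ) x).flip (fderiv ℝ f x (e i))) x := by
    intro i x
    have h1 : HasFDerivAt (fun y => fderiv ℝ f y (e i))
        ((fderiv ℝ (fderiv ℝ f) x).flip (e i)) x := by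
      have h := (hf'd x).clm_apply (hasFDerivAt_const (e i) x)
      simpa using h
    have h2 := (hφ'd x).clm_apply h1
    exact h2
  have hwdiff : ∀ i, Differentiable ℝ (w i) := fun i x => (hwd i x).differentiableAt
  have hwfd : ∀ i x, fderiv ℝ (w i) x (e i)
      = fderiv ℝ φ x (fderiv ℝ (fderiv ℝ f) x (e i) (e i))
        + fderiv ℝ (fderiv ℝ φ) x (e i) (fderiv ℝ f x (e i)) := by
    intro i x
    rw [(hwd i x).fderiv]
    simp [ContinuousLinearMap.add_apply, ContinuousLinearMap.comp_apply,
      ContinuousLinearMap.flip_apply]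
  have hwcont : ∀ i, Continuous (w i) :=
    fun i => hcφ'.clm_apply (hcf'.clm_apply continuous_const)
  -- symmetry of second derivative of φ
  have hsymm : ∀ x u v', fderiv ℝ (fderiv ℝ φ) x u v' = fderiv ℝ (fderiv ℝ φ) x v' u :=
    fun x => (hφ.contDiffAt.isSymmSndFDerivAt (by simp; exact WithTop.coe_le_coe.2 le_top))
  -- pointwise bounds & integrability of the basic pieces
  have int1 : ∀ i, Integrable (fun x =>
      (fderiv ℝ (fderiv ℝ φ) x (e i) (fderiv ℝ f x (e i))) * ρ x) := by
    intro i
    apply key _ (A2 * B1) (a2 + b1)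
    · exact (hcφ''.clm_apply continuous_const).clm_apply (hcf'.clm_apply continuous_const)
    · intro x
      rw [← Real.norm_eq_abs]
      calc ‖fderiv ℝ (fderiv ℝ φ) x (e i) (fderiv ℝ f x (e i))‖
          ≤ ‖fderiv ℝ (fderiv ℝ φ) x (e i)‖ * ‖fderiv ℝ f x (e i)‖ :=
            ContinuousLinearMap.le_opNorm _ _
        _ ≤ (‖fderiv ℝ (fderiv ℝ φ) x‖ * ‖e i‖) * (‖fderiv ℝ f x‖ * ‖e i‖) := by
            apply mul_le_mul (ContinuousLinearMap.le_opNorm _ _)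
              (ContinuousLinearMap.le_opNorm _ _) (norm_nonneg _) (by positivity)
        _ = ‖fderiv ℝ (fderiv ℝ φ) x‖ * ‖fderiv ℝ f x‖ := by
            rw [he_norm i]; ring
        _ ≤ (A2 * B1) * (1 + ‖x‖) ^ (a2 + b1) :=
            growth_mul (ContinuousLinearMap.opNorm_nonneg _) (ContinuousLinearMap.opNorm_nonneg _) (hA2 x) (hB1 x)
  have int2 : ∀ i, Integrable (fun x =>
      (fderiv ℝ φ x (fderiv ℝ (fderiv ℝ f) x (e i) (e i))) * ρ x) := by
    intro i
    apply key _ (A1 * B2) (a1 + b2)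
    · exact hcφ'.clm_apply ((hcf''.clm_apply continuous_const).clm_apply continuous_const)
    · intro x
      rw [← Real.norm_eq_abs]
      calc ‖fderiv ℝ φ x (fderiv ℝ (fderiv ℝ f) x (e i) (e i))‖
          ≤ ‖fderiv ℝ φ x‖ * ‖fderiv ℝ (fderiv ℝ f) x (e i) (e i)‖ :=
            ContinuousLinearMap.le_opNorm _ _
        _ ≤ ‖fderiv ℝ φ x‖ * ((‖fderiv ℝ (fderiv ℝ f) x‖ * ‖e i‖) * ‖e i‖) := by
            apply mul_le_mul_of_nonneg_left _ (norm_nonneg _)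
            apply le_trans (ContinuousLinearMap.le_opNorm _ _)
            apply mul_le_mul_of_nonneg_right (ContinuousLinearMap.le_opNorm _ _) (norm_nonneg _)
        _ = ‖fderiv ℝ φ x‖ * ‖fderiv ℝ (fderiv ℝ f) x‖ := by rw [he_norm i]; ring
        _ ≤ (A1 * B2) * (1 + ‖x‖) ^ (a1 + b2) :=
            growth_mul (norm_nonneg _) (ContinuousLinearMap.opNorm_nonneg _) (hA1 x) (hB2 x)
  have hwbound : ∀ i x, |w i x| ≤ (A1 * B1) * (1 + ‖x‖) ^ (a1 + b1) := by
    intro i x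
    rw [← Real.norm_eq_abs]
    calc ‖w i x‖ ≤ ‖fderiv ℝ φ x‖ * ‖fderiv ℝ f x (e i)‖ := ContinuousLinearMap.le_opNorm _ _
      _ ≤ ‖fderiv ℝ φ x‖ * (‖fderiv ℝ f x‖ * ‖e i‖) := by
          apply mul_le_mul_of_nonneg_left (ContinuousLinearMap.le_opNorm _ _) (norm_nonneg _)
      _ = ‖fderiv ℝ φ x‖ * ‖fderiv ℝ f x‖ := by rw [he_norm i]; ring
      _ ≤ (A1 * B1) * (1 + ‖x‖) ^ (a1 + b1) :=
          growth_mul (norm_nonneg _) (norm_nonneg _) (hA1 x) (hB1 x)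
  have intw : ∀ i, Integrable (fun x => w i x * ρ x) := by
    intro i
    exact key _ (A1 * B1) (a1 + b1) (hwcont i) (hwbound i)
  have int3 : ∀ i, Integrable (fun x => (⟪f x, e i⟫ * w i x) * ρ x) := by
    intro i
    apply key _ (B0 * (A1 * B1)) (b0 + (a1 + b1))
    · exact (hcf.inner continuous_const).mul (hwcont i)
    · intro x
      rw [abs_mul]
      apply growth_mul (abs_nonneg _) (abs_nonneg _) _ (hwbound i x)
      calc |⟪f x, e i⟫| ≤ ‖f x‖ * ‖e i‖ := abs_real_inner_le_norm _ _
        _ = ‖f x‖ := by rw [he_norm i]; ring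
        _ ≤ B0 * (1 + ‖x‖) ^ b0 := hB0 x
  -- integration by parts for each i
  have main_i : ∀ i,
      ∫ x, (fderiv ℝ (fderiv ℝ φ) x (e i) (fderiv ℝ f x (e i))) * ρ x
        = - (∫ x, (fderiv ℝ φ x (fderiv ℝ (fderiv ℝ f) x (e i) (e i))) * ρ x)
          - (2 / σ ^ 2) * ∫ x, (⟪f x, e i⟫ * w i x) * ρ x := by
    intro i
    have hInt1 : Integrable (fun x => fderiv ℝ (w i) x (e i) * ρ x) := by
      apply ((int2 i).add (int1 i)).congr
      filter_upwards with x
      simp only [Pi.add_apply]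
      rw [hwfd i x]
      ring
    have hInt2 : Integrable (fun x => w i x * fderiv ℝ ρ x (e i)) := by
      apply ((int3 i).const_mul (2 / σ ^ 2)).congr
      filter_upwards with x
      rw [hρfd x (e i)]
      ring
    have h0 := integral_mul_fderiv_eq_neg_fderiv_mul_of_integrable
      (μ := volume) hInt1 hInt2 (intw i) (fun x _ => hwdiff i x) (fun x _ => hρdiff x)
    have hL : ∫ x, w i x * fderiv ℝ ρ x (e i)
        = (2 / σ ^ 2) * ∫ x, (⟪f x, e i⟫ * w i x) * ρ x := by
      rw [← integral_const_mul]
      apply integral_congr_ae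
      filter_upwards with x
      rw [hρfd x (e i)]
      ring
    have hR : ∫ x, fderiv ℝ (w i) x (e i) * ρ x
        = (∫ x, (fderiv ℝ φ x (fderiv ℝ (fderiv ℝ f) x (e i) (e i))) * ρ x)
          + ∫ x, (fderiv ℝ (fderiv ℝ φ) x (e i) (fderiv ℝ f x (e i))) * ρ x := by
      rw [← integral_add (int2 i) (int1 i)]
      apply integral_congr_ae
      filter_upwards with x
      rw [hwfd i x]
      ring
    rw [hL, hR] at h0
    linarith
  -- rewrite the left-hand side
  have hLHS : ∫ x, (σ ^ 2 * ∑ i : Fin d, iteratedFDeriv ℝ 2 φ x ![fderiv ℝ f x (e i), e i]) * ρ x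
      = ∑ i : Fin d, σ ^ 2 *
          ∫ x, (fderiv ℝ (fderiv ℝ φ) x (e i) (fderiv ℝ f x (e i))) * ρ x := by
    have hpt : ∀ x, (σ ^ 2 * ∑ i : Fin d, iteratedFDeriv ℝ 2 φ x ![fderiv ℝ f x (e i), e i]) * ρ x
        = ∑ i : Fin d, σ ^ 2 * ((fderiv ℝ (fderiv ℝ φ) x (e i) (fderiv ℝ f x (e i))) * ρ x) := by
      intro x
      have hterm : ∀ i : Fin d, iteratedFDeriv ℝ 2 φ x ![fderiv ℝ f x (e i), e i]
          = fderiv ℝ (fderiv ℝ φ) x (e i) (fderiv ℝ f x (e i)) := by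
        intro i
        rw [iteratedFDeriv_two_apply]
        simp only [Matrix.cons_val_zero, Matrix.cons_val_one, Matrix.head_cons]
        exact hsymm x _ _
      calc (σ ^ 2 * ∑ i : Fin d, iteratedFDeriv ℝ 2 φ x ![fderiv ℝ f x (e i), e i]) * ρ x
          = (σ ^ 2 * ∑ i : Fin d, fderiv ℝ (fderiv ℝ φ) x (e i) (fderiv ℝ f x (e i))) * ρ x := by
            rw [Finset.sum_congr rfl (fun i _ => hterm i)]
        _ = ∑ i : Fin d, σ ^ 2 * ((fderiv ℝ (fderiv ℝ φ) x (e i) (fderiv ℝ f x (e i))) * ρ x) := by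
            rw [Finset.mul_sum, Finset.sum_mul]
            apply Finset.sum_congr rfl
            intro i _
            ring
    rw [integral_congr_ae (Filter.Eventually.of_forall hpt)]
    rw [integral_finset_sum _ (fun i _ => (int1 i).const_mul (σ ^ 2))]
    apply Finset.sum_congr rfl
    intro i _
    rw [integral_const_mul]
  -- rewrite the right-hand side
  have hRHS : ∫ x, -(fderiv ℝ φ x
          (σ ^ 2 • (∑ i : Fin d, iteratedFDeriv ℝ 2 f x ![e i, e i])
            + (2 : ℝ) • fderiv ℝ f x (f x))) * ρ x
      = ∑ i : Fin d, (-(σ ^ 2) * (∫ x, (fderiv ℝ φ x (fderiv ℝ (fderiv ℝ f) x (e i) (e i))) * ρ x)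
          + (-2) * ∫ x, (⟪f x, e i⟫ * w i x) * ρ x) := by
    have hpt : ∀ x, -(fderiv ℝ φ x
          (σ ^ 2 • (∑ i : Fin d, iteratedFDeriv ℝ 2 f x ![e i, e i])
            + (2 : ℝ) • fderiv ℝ f x (f x))) * ρ x
        = ∑ i : Fin d, (-(σ ^ 2) * ((fderiv ℝ φ x (fderiv ℝ (fderiv ℝ f) x (e i) (e i))) * ρ x)
            + (-2) * ((⟪f x, e i⟫ * w i x) * ρ x)) := by
      intro x
      have hterm : ∀ i : Fin d, iteratedFDeriv ℝ 2 f x ![e i, e i]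
          = fderiv ℝ (fderiv ℝ f) x (e i) (e i) := by
        intro i
        rw [iteratedFDeriv_two_apply]
        simp only [Matrix.cons_val_zero, Matrix.cons_val_one, Matrix.head_cons]
      have hfsum : fderiv ℝ f x (f x) = ∑ i : Fin d, ⟪f x, e i⟫ • fderiv ℝ f x (e i) := by
        conv_lhs => rw [← hbasis (f x)]
        rw [_root_.map_sum]
        exact Finset.sum_congr rfl fun i _ => (fderiv ℝ f x).map_smul _ _
      have happ : fderiv ℝ φ x
          (σ ^ 2 • (∑ i : Fin d, iteratedFDeriv ℝ 2 f x ![e i, e i])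
            + (2 : ℝ) • fderiv ℝ f x (f x))
          = σ ^ 2 * (∑ i : Fin d, fderiv ℝ φ x (fderiv ℝ (fderiv ℝ f) x (e i) (e i)))
            + 2 * (∑ i : Fin d, ⟪f x, e i⟫ * w i x) := by
        rw [map_add, ContinuousLinearMap.map_smul, ContinuousLinearMap.map_smul]
        congr 1
        · rw [Finset.sum_congr rfl (fun i _ => hterm i), _root_.map_sum]
          simp [smul_eq_mul]
        · rw [hfsum, _root_.map_sum]
          simp only [ContinuousLinearMap.map_smul, smul_eq_mul, hwdef]
      rw [happ, neg_mul, Finset.mul_sum, Finset.mul_sum, ← Finset.sum_add_distrib,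
        Finset.sum_mul, ← Finset.sum_neg_distrib]
      apply Finset.sum_congr rfl
      intro i _
      ring
    rw [integral_congr_ae (Filter.Eventually.of_forall hpt)]
    rw [integral_finset_sum _ (fun i _ =>
      ((((int2 i).const_mul (-(σ ^ 2))).add ((int3 i).const_mul (-2))).congr
        (by filter_upwards with x; simp only [Pi.add_apply])))]
    apply Finset.sum_congr rfl
    intro i _
    rw [integral_add ((int2 i).const_mul (-(σ ^ 2))) ((int3 i).const_mul (-2)),
      integral_const_mul, integral_const_mul]
  -- conclude
  rw [hLHS, hRHS]
  apply Finset.sum_congr rfl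
  intro i _
  rw [main_i i]
  field_simp
  ring
end

section
/- Let d ≥ 1, σ > 0, b, c ∈ ℝ, let f : ℝ^d → ℝ^d be of class C² and φ : ℝ^d → ℝ of class C⁴. Define the operators Lψ := ∇ψ·f + (σ²/2)Δψ and Ā₁ψ := b∇ψ·f + (c²σ²/2)Δψ. Then the commutator satisfies, pointwise for every x ∈ ℝ^d: [L, Ā₁]φ(x) = L(Ā₁φ)(x) − Ā₁(Lφ)(x) = ((b − c²)/2) σ² ∇φ(x)·Σ_{i=1}^d f''(x)(e_i,e_i) + (b − c²) σ² Σ_{i=1}^d φ''(x)(f'(x)e_i, e_i). -/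
open MeasureTheory Real

/-! Writing `D ψ = ψ' f` and `Δₑ ψ = Σᵢ ψ''(eᵢ, eᵢ)`, both operators have the form `α D + β Δₑ`,
so by bilinearity their commutator is `(b σ²/2 - c² σ²/2) [Δₑ, D]`. The identity
`[Δₑ, D] φ = φ'(Δₑ f) + 2 Σᵢ φ''(f' eᵢ, eᵢ)` is the second-order Leibniz rule for `y ↦ φ'(y) (f y)`,
in which the third-order terms `φ⁽³⁾(eᵢ, eᵢ, f)` cancel by the symmetry of `φ⁽³⁾`. -/

section

variable {E F G : Type*} [NormedAddCommGroup E] [NormedSpace ℝ E]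
  [NormedAddCommGroup F] [NormedSpace ℝ F] [NormedAddCommGroup G] [NormedSpace ℝ G]

theorem fderiv_clm_apply_const {c : E → F →L[ℝ] G} {x : E} (hc : DifferentiableAt ℝ c x)
    (u : F) (v : E) : fderiv ℝ (fun y => c y u) x v = fderiv ℝ c x v u := by
  simp [fderiv_clm_apply hc (differentiableAt_const u)]

theorem fderiv_fderiv_clm_apply {c : E → F →L[ℝ] G} {u : E → F}
    (hc : ContDiff ℝ 2 c) (hu : ContDiff ℝ 2 u) (x v w : E) :
    fderiv ℝ (fderiv ℝ fun y => c y (u y)) x v w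
      = fderiv ℝ (fderiv ℝ c) x v w (u x) + fderiv ℝ c x w (fderiv ℝ u x v)
        + fderiv ℝ c x v (fderiv ℝ u x w) + c x (fderiv ℝ (fderiv ℝ u) x v w) := by
  have hc1 : Differentiable ℝ c := hc.differentiable two_ne_zero
  have hu1 : Differentiable ℝ u := hu.differentiable two_ne_zero
  have hc2 : Differentiable ℝ (fderiv ℝ c) :=
    (hc.fderiv_right (m := 1) le_rfl).differentiable one_ne_zero
  have hu2 : Differentiable ℝ (fderiv ℝ u) :=
    (hu.fderiv_right (m := 1) le_rfl).differentiable one_ne_zero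
  have hg1 : Differentiable ℝ (fderiv ℝ fun y => c y (u y)) :=
    ((hc.clm_apply hu).fderiv_right (m := 1) le_rfl).differentiable one_ne_zero
  have deriv_along_w : (fun y => fderiv ℝ (fun z => c z (u z)) y w)
      = fun y => c y (fderiv ℝ u y w) + fderiv ℝ c y w (u y) := by
    ext y
    simp [fderiv_clm_apply (hc1 y) (hu1 y)]
  rw [← fderiv_clm_apply_const (hg1 x), deriv_along_w,
    fderiv_fun_add ((hc1 x).clm_apply ((hu2 x).clm_apply (differentiableAt_const w)))
      (((hc2 x).clm_apply (differentiableAt_const w)).clm_apply (hu1 x)),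
    add_apply,
    fderiv_clm_apply (hc1 x) ((hu2 x).clm_apply (differentiableAt_const w)),
    fderiv_clm_apply ((hc2 x).clm_apply (differentiableAt_const w)) (hu1 x)]
  simp [fderiv_clm_apply_const (hu2 x), fderiv_clm_apply_const (hc2 x)]
  abel

theorem fderiv_fderiv_fderiv_apply_apply_comm {ψ : E → F} (hψ : ContDiff ℝ 3 ψ) (x a b : E) :
    fderiv ℝ (fderiv ℝ (fderiv ℝ ψ)) x a a b = fderiv ℝ (fderiv ℝ (fderiv ℝ ψ)) x b a a := by
  have hψ'' : Differentiable ℝ (fderiv ℝ (fderiv ℝ ψ)) :=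
    ((hψ.fderiv_right (m := 2) le_rfl).fderiv_right (m := 1) le_rfl).differentiable one_ne_zero
  have symm_ψ : ∀ y, IsSymmSndFDerivAt ℝ ψ y := fun y =>
    hψ.contDiffAt.isSymmSndFDerivAt (by simp; norm_num)
  have symm_ψ' : IsSymmSndFDerivAt ℝ (fderiv ℝ ψ) x :=
    (hψ.fderiv_right (m := 2) le_rfl).contDiffAt.isSymmSndFDerivAt (by simp)
  have swap_right : fderiv ℝ (fderiv ℝ (fderiv ℝ ψ)) x a a b
      = fderiv ℝ (fderiv ℝ (fderiv ℝ ψ)) x a b a := by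
    rw [← fderiv_clm_apply_const (hψ'' x), ← fderiv_clm_apply_const (hψ'' x),
      ← fderiv_clm_apply_const ((hψ'' x).clm_apply (differentiableAt_const a)),
      ← fderiv_clm_apply_const ((hψ'' x).clm_apply (differentiableAt_const b))]
    simp_rw [symm_ψ _ a b]
  rw [swap_right, symm_ψ' a b]

variable {ι : Type*} [Fintype ι]

noncomputable def drift (f : E → E) (ψ : E → F) : E → F := fun x => fderiv ℝ ψ x (f x)

-- For an orthonormal basis `e` this is the Laplacian `Δψ`.
noncomputable def laplacianAlong (e : ι → E) (ψ : E → F) : E → F :=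
  fun x => ∑ i, iteratedFDeriv ℝ 2 ψ x ![e i, e i]

theorem laplacianAlong_eq_sum_fderiv_fderiv (e : ι → E) (ψ : E → F) (x : E) :
    laplacianAlong e ψ x = ∑ i, fderiv ℝ (fderiv ℝ ψ) x (e i) (e i) := by
  simp [laplacianAlong, iteratedFDeriv_two_apply]

theorem ContDiff.drift {n : WithTop ℕ∞} {f : E → E} {ψ : E → F} (hf : ContDiff ℝ n f)
    (hψ : ContDiff ℝ (n + 1) ψ) : ContDiff ℝ n (drift f ψ) :=
  (hψ.fderiv_right le_rfl).clm_apply hf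

theorem ContDiff.laplacianAlong {n : WithTop ℕ∞} (e : ι → E) {ψ : E → F}
    (hψ : ContDiff ℝ (n + 2) ψ) : ContDiff ℝ n (laplacianAlong e ψ) :=
  ContDiff.sum fun i _ =>
    (ContinuousMultilinearMap.apply ℝ (fun _ : Fin 2 => E) F ![e i, e i]).contDiff.comp
      (hψ.iteratedFDeriv_right (by simp))

theorem drift_linear_comb (f : E → E) {ψ₁ ψ₂ : E → F} {x : E}
    (h₁ : DifferentiableAt ℝ ψ₁ x) (h₂ : DifferentiableAt ℝ ψ₂ x) (α β : ℝ) :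
    drift f (α • ψ₁ + β • ψ₂) x = α • drift f ψ₁ x + β • drift f ψ₂ x := by
  simp only [drift, fderiv_add (h₁.const_smul α) (h₂.const_smul β), fderiv_const_smul h₁,
    fderiv_const_smul h₂, add_apply, smul_apply]

theorem laplacianAlong_linear_comb (e : ι → E) {ψ₁ ψ₂ : E → F} {x : E}
    (h₁ : ContDiffAt ℝ 2 ψ₁ x) (h₂ : ContDiffAt ℝ 2 ψ₂ x) (α β : ℝ) :
    laplacianAlong e (α • ψ₁ + β • ψ₂) x
      = α • laplacianAlong e ψ₁ x + β • laplacianAlong e ψ₂ x := by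
  have h₁' : ContDiffAt ℝ 2 (α • ψ₁) x := h₁.const_smul α
  have h₂' : ContDiffAt ℝ 2 (β • ψ₂) x := h₂.const_smul β
  simp only [laplacianAlong, iteratedFDeriv_add_apply h₁' h₂', iteratedFDeriv_const_smul_apply h₁,
    iteratedFDeriv_const_smul_apply h₂, add_apply, smul_apply, Finset.smul_sum,
    Finset.sum_add_distrib]

theorem fderiv_fderiv_drift_sub_fderiv_fderiv_fderiv {f : E → E} {φ : E → F}
    (hf : ContDiff ℝ 2 f) (hφ : ContDiff ℝ 3 φ) (x v : E) :
    fderiv ℝ (fderiv ℝ (drift f φ)) x v v - fderiv ℝ (fderiv ℝ (fderiv ℝ φ)) x (f x) v v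
      = fderiv ℝ φ x (fderiv ℝ (fderiv ℝ f) x v v)
        + (2 : ℝ) • fderiv ℝ (fderiv ℝ φ) x (fderiv ℝ f x v) v := by
  have symm_φ : IsSymmSndFDerivAt ℝ φ x := hφ.contDiffAt.isSymmSndFDerivAt (by simp; norm_num)
  unfold drift
  rw [fderiv_fderiv_clm_apply (hφ.fderiv_right le_rfl) hf,
    fderiv_fderiv_fderiv_apply_apply_comm hφ, symm_φ v]
  module

theorem laplacianAlong_drift_sub_drift_laplacianAlong {f : E → E} {φ : E → F}
    (hf : ContDiff ℝ 2 f) (hφ : ContDiff ℝ 3 φ) (e : ι → E) (x : E) :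
    laplacianAlong e (drift f φ) x - drift f (laplacianAlong e φ) x
      = fderiv ℝ φ x (laplacianAlong e f x)
        + (2 : ℝ) • ∑ i, iteratedFDeriv ℝ 2 φ x ![fderiv ℝ f x (e i), e i] := by
  have hφ'' : Differentiable ℝ (fderiv ℝ (fderiv ℝ φ)) :=
    ((hφ.fderiv_right (m := 2) le_rfl).fderiv_right (m := 1) le_rfl).differentiable one_ne_zero
  have drift_laplacianAlong : drift f (laplacianAlong e φ) x
      = ∑ i, fderiv ℝ (fderiv ℝ (fderiv ℝ φ)) x (f x) (e i) (e i) := by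
    rw [drift, funext (laplacianAlong_eq_sum_fderiv_fderiv e φ), fderiv_fun_sum fun i _ =>
      ((hφ'' x).clm_apply (differentiableAt_const (e i))).clm_apply (differentiableAt_const _)]
    simp [fderiv_clm_apply_const ((hφ'' x).clm_apply (differentiableAt_const _)),
      fderiv_clm_apply_const (hφ'' x)]
  simp only [drift_laplacianAlong, laplacianAlong_eq_sum_fderiv_fderiv, iteratedFDeriv_two_apply,
    ← Finset.sum_sub_distrib, fderiv_fderiv_drift_sub_fderiv_fderiv_fderiv hf hφ, map_sum,
    Finset.sum_add_distrib, Finset.smul_sum]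
  simp

noncomputable def secondOrderOp (f : E → E) (e : ι → E) (α β : ℝ) (ψ : E → F) : E → F :=
  α • drift f ψ + β • laplacianAlong e ψ

theorem secondOrderOp_commutator {f : E → E} {φ : E → F} (hf : ContDiff ℝ 2 f)
    (hφ : ContDiff ℝ 4 φ) (e : ι → E) (α β α' β' : ℝ) (x : E) :
    secondOrderOp f e α β (secondOrderOp f e α' β' φ) x
        - secondOrderOp f e α' β' (secondOrderOp f e α β φ) x
      = (α' * β - α * β') • (laplacianAlong e (drift f φ) x - drift f (laplacianAlong e φ) x) := by
  have hD : ContDiff ℝ 2 (drift f φ) := hf.drift (hφ.of_le (by norm_num))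
  have hΔ : ContDiff ℝ 2 (laplacianAlong e φ) := ContDiff.laplacianAlong e hφ
  simp only [secondOrderOp, Pi.add_apply, Pi.smul_apply,
    drift_linear_comb f (hD.differentiable two_ne_zero x) (hΔ.differentiable two_ne_zero x),
    laplacianAlong_linear_comb e hD.contDiffAt hΔ.contDiffAt]
  module

end

theorem commutator_generator_postprocessor_general
    (d : ℕ) (σ b c : ℝ)
    (f : EuclideanSpace ℝ (Fin d) → EuclideanSpace ℝ (Fin d)) (hf : ContDiff ℝ 2 f)
    (φ : EuclideanSpace ℝ (Fin d) → ℝ) (hφ : ContDiff ℝ 4 φ)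
    (e : Fin d → EuclideanSpace ℝ (Fin d))
    (L Abar : (EuclideanSpace ℝ (Fin d) → ℝ) → EuclideanSpace ℝ (Fin d) → ℝ)
    (hL : ∀ ψ x, L ψ x
      = fderiv ℝ ψ x (f x) + σ ^ 2 / 2 * ∑ i : Fin d, iteratedFDeriv ℝ 2 ψ x ![e i, e i])
    (hAbar : ∀ ψ x, Abar ψ x
      = b * fderiv ℝ ψ x (f x)
        + c ^ 2 * σ ^ 2 / 2 * ∑ i : Fin d, iteratedFDeriv ℝ 2 ψ x ![e i, e i]) :
    ∀ x, L (Abar φ) x - Abar (L φ) x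
      = (b - c ^ 2) / 2 * σ ^ 2
          * fderiv ℝ φ x (∑ i : Fin d, iteratedFDeriv ℝ 2 f x ![e i, e i])
        + (b - c ^ 2) * σ ^ 2
          * ∑ i : Fin d, iteratedFDeriv ℝ 2 φ x ![fderiv ℝ f x (e i), e i] := by
  intro x
  have hL_eq : L = secondOrderOp f e 1 (σ ^ 2 / 2) := by
    ext ψ y
    simp [hL, secondOrderOp, drift, laplacianAlong]
  have hAbar_eq : Abar = secondOrderOp f e b (c ^ 2 * σ ^ 2 / 2) := by
    ext ψ y
    simp [hAbar, secondOrderOp, drift, laplacianAlong]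
  rw [hL_eq, hAbar_eq, secondOrderOp_commutator hf hφ,
    laplacianAlong_drift_sub_drift_laplacianAlong hf (hφ.of_le (by norm_num))]
  simp only [laplacianAlong, smul_eq_mul]
  ring

/-- For `f : ℝ^d → ℝ^d` of class `C²` and `φ : ℝ^d → ℝ` of class `C⁴`,
with `Lψ = ∇ψ·f + (σ²/2)Δψ` and `Ā₁ψ = b∇ψ·f + (c²σ²/2)Δψ`, the commutator satisfies
pointwise
`[L,Ā₁]φ(x) = ((b-c²)/2)σ² φ'(x)(Σᵢ f''(x)(eᵢ,eᵢ)) + (b-c²)σ² Σᵢ φ''(x)(f'(x)eᵢ, eᵢ)`. -/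
theorem commutator_generator_postprocessor
    (d : ℕ) (hd : 1 ≤ d) (σ b c : ℝ) (hσ : 0 < σ)
    (f : EuclideanSpace ℝ (Fin d) → EuclideanSpace ℝ (Fin d)) (hf : ContDiff ℝ 2 f)
    (φ : EuclideanSpace ℝ (Fin d) → ℝ) (hφ : ContDiff ℝ 4 φ)
    (e : Fin d → EuclideanSpace ℝ (Fin d))
    (he : ∀ i, e i = EuclideanSpace.single i 1)
    (L Abar : (EuclideanSpace ℝ (Fin d) → ℝ) → EuclideanSpace ℝ (Fin d) → ℝ)
    (hL : ∀ ψ x, L ψ x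
      = fderiv ℝ ψ x (f x) + σ ^ 2 / 2 * ∑ i : Fin d, iteratedFDeriv ℝ 2 ψ x ![e i, e i])
    (hAbar : ∀ ψ x, Abar ψ x
      = b * fderiv ℝ ψ x (f x)
        + c ^ 2 * σ ^ 2 / 2 * ∑ i : Fin d, iteratedFDeriv ℝ 2 ψ x ![e i, e i]) :
    ∀ x, L (Abar φ) x - Abar (L φ) x
      = (b - c ^ 2) / 2 * σ ^ 2
          * fderiv ℝ φ x (∑ i : Fin d, iteratedFDeriv ℝ 2 f x ![e i, e i])
        + (b - c ^ 2) * σ ^ 2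
          * ∑ i : Fin d, iteratedFDeriv ℝ 2 φ x ![fderiv ℝ f x (e i), e i] :=
  commutator_generator_postprocessor_general d σ b c f hf φ hφ e L Abar hL hAbar
end
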